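/- arXiv:2106.07744 — 6 statements merged into one kernel-verified Lean document; each statement's English description precedes it below -/
import Mathlib

section
/- An abstract rewriting system has the strong convergence property if and only if it has the polygon property. -/
/-- `f` is a sequence of moves of length `n` (indices `0,…,n`) in the rewriting
system `r`. -/
def IsMoveSeq {T : Type*} (r : T → T → Prop) (f : ℕ → T) (n : ℕ) : Prop :=
  ∀ i < n, r (f i) (f (i + 1))

/-- A position is terminal if no move is possible from it. -/
def IsTerminal {T : Type*} (r : T → T → Prop) (t : T) : Prop :=
  ∀ s, ¬ r t s

/-- The polygon property: given moves `t → s` and `t → s'`, either there are two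
sequences of moves of the same length from `s` and `s'` ending at a common
position, or there are infinite sequences of moves from both `s` and `s'`. -/
def PolygonProperty {T : Type*} (r : T → T → Prop) : Prop :=
  ∀ t s s', r t s → r t s' →
    (∃ (ℓ : ℕ) (a b : ℕ → T), a 0 = s ∧ b 0 = s' ∧
        IsMoveSeq r a ℓ ∧ IsMoveSeq r b ℓ ∧ a ℓ = b ℓ) ∨
    ((∃ a : ℕ → T, a 0 = s ∧ ∀ i, r (a i) (a (i + 1))) ∧
     (∃ b : ℕ → T, b 0 = s' ∧ ∀ i, r (b i) (b (i + 1))))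

/-- The strong convergence property: if some sequence of moves from `t`
terminates at a position `t*`, then there is no infinite sequence of moves from
`t`, and every terminating sequence of moves from `t` ends at `t*` and has the
same length. -/
def StrongConvergence {T : Type*} (r : T → T → Prop) : Prop :=
  ∀ (t : T) (n : ℕ) (f : ℕ → T), f 0 = t → IsMoveSeq r f n → IsTerminal r (f n) →
    (¬ ∃ a : ℕ → T, a 0 = t ∧ ∀ i, r (a i) (a (i + 1))) ∧
    ∀ (m : ℕ) (g : ℕ → T), g 0 = t → IsMoveSeq r g m → IsTerminal r (g m) →
      g m = f n ∧ m = n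

/-- `t` reaches terminal `t'` in `n` steps. -/
def MyTerm {T : Type*} (r : T → T → Prop) (t : T) (n : ℕ) (t' : T) : Prop :=
  ∃ f : ℕ → T, f 0 = t ∧ IsMoveSeq r f n ∧ f n = t' ∧ IsTerminal r t'

lemma my_prepend {T : Type*} {r : T → T → Prop} {t s : T} {g : ℕ → T} {m : ℕ}
    (hts : r t s) (hg0 : g 0 = s) (hmg : IsMoveSeq r g m) :
    ∃ h : ℕ → T, h 0 = t ∧ IsMoveSeq r h (m + 1) ∧ h (m + 1) = g m := by
  refine ⟨fun i => if i = 0 then t else g (i - 1), by simp, ?_, by simp⟩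
  intro i hi
  rcases i with _ | j
  · simpa [hg0] using hts
  · simpa using hmg j (by omega)

lemma my_prepend_inf {T : Type*} {r : T → T → Prop} {t s : T} {a : ℕ → T}
    (hts : r t s) (ha0 : a 0 = s) (ha : ∀ i, r (a i) (a (i + 1))) :
    ∃ a' : ℕ → T, a' 0 = t ∧ ∀ i, r (a' i) (a' (i + 1)) := by
  refine ⟨fun i => if i = 0 then t else a (i - 1), by simp, ?_⟩
  intro i
  rcases i with _ | j
  · simpa [ha0] using hts
  · simpa using ha j

lemma my_exists_inf {T : Type*} (r : T → T → Prop) (s : T)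
    (hs : ¬ ∃ (n : ℕ) (f : ℕ → T), f 0 = s ∧ IsMoveSeq r f n ∧ IsTerminal r (f n)) :
    ∃ a : ℕ → T, a 0 = s ∧ ∀ i, r (a i) (a (i + 1)) := by
  classical
  set P : T → Prop := fun x =>
    ¬ ∃ (n : ℕ) (f : ℕ → T), f 0 = x ∧ IsMoveSeq r f n ∧ IsTerminal r (f n) with hP
  have step : ∀ x, P x → ∃ y, r x y ∧ P y := by
    intro x hx
    by_contra hcon
    have hcon' : ∀ y, r x y → ¬ P y := fun y hy hPy => hcon ⟨y, hy, hPy⟩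
    apply hx
    by_cases hxt : IsTerminal r x
    · exact ⟨0, fun _ => x, rfl, fun i hi => absurd hi (by omega), hxt⟩
    · simp only [IsTerminal, not_forall, not_not] at hxt
      obtain ⟨y, hy⟩ := hxt
      have hny : ¬ P y := hcon' y hy
      rw [hP] at hny
      obtain ⟨m, g, hg0, hmg, hgt⟩ := not_not.mp hny
      obtain ⟨h, hh0, hmh, hhe⟩ := my_prepend hy hg0 hmg
      exact ⟨m + 1, h, hh0, hmh, hhe ▸ hgt⟩
  choose next hr hPn using step
  let F : {x // P x} → {x // P x} := fun p => ⟨next p.1 p.2, hPn p.1 p.2⟩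
  let c : ℕ → {x // P x} := fun n => F^[n] ⟨s, hs⟩
  refine ⟨fun n => (c n).1, rfl, ?_⟩
  intro i
  show r (c i).1 (c (i + 1)).1
  have hcs : c (i + 1) = F (c i) := Function.iterate_succ_apply' F i _
  rw [hcs]
  exact hr _ _

lemma my_exists_term {T : Type*} (r : T → T → Prop) (s : T)
    (h : ¬ ∃ a : ℕ → T, a 0 = s ∧ ∀ i, r (a i) (a (i + 1))) :
    ∃ (n : ℕ) (f : ℕ → T), f 0 = s ∧ IsMoveSeq r f n ∧ IsTerminal r (f n) := by
  by_contra hterm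
  exact h (my_exists_inf r s hterm)

lemma my_term_concat {T : Type*} {r : T → T → Prop} {s t' : T} {a : ℕ → T} {ℓ k : ℕ}
    (ha0 : a 0 = s) (hma : IsMoveSeq r a ℓ) (ht : MyTerm r (a ℓ) k t') :
    MyTerm r s (ℓ + k) t' := by
  obtain ⟨d, hd0, hmd, hdk, hterm⟩ := ht
  refine ⟨fun i => if i ≤ ℓ then a i else d (i - ℓ), by simp [ha0], ?_, ?_, hterm⟩
  · intro i hi
    show r (if i ≤ ℓ then a i else d (i - ℓ)) (if i + 1 ≤ ℓ then a (i + 1) else d (i + 1 - ℓ))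
    by_cases h1 : i + 1 ≤ ℓ
    · rw [if_pos (by omega : i ≤ ℓ), if_pos h1]
      exact hma i (by omega)
    · have hiℓ : ℓ ≤ i := by omega
      have e1 : (if i ≤ ℓ then a i else d (i - ℓ)) = d (i - ℓ) := by
        rcases eq_or_lt_of_le hiℓ with h | h
        · simp [← h, hd0]
        · rw [if_neg (by omega)]
      rw [e1, if_neg (by omega)]
      have e2 : i + 1 - ℓ = (i - ℓ) + 1 := by omega
      rw [e2]
      exact hmd (i - ℓ) (by omega)
  · show (if ℓ + k ≤ ℓ then a (ℓ + k) else d (ℓ + k - ℓ)) = t'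
    rcases Nat.eq_zero_or_pos k with hk | hk
    · subst hk
      rw [Nat.add_zero, if_pos le_rfl, ← hdk, hd0]
    · rw [if_neg (by omega)]
      simpa using hdk

/-- Key step: every single move from a position terminating in `n` steps leads
to a position terminating at the same terminal in `n - 1` steps. -/
lemma my_term_step {T : Type*} {r : T → T → Prop} (hp : PolygonProperty r) :
    ∀ (n : ℕ) (t t' : T), MyTerm r t n t' → ∀ s, r t s →
      ∃ k, n = k + 1 ∧ MyTerm r s k t' := by
  intro n
  induction n using Nat.strong_induction_on with
  | _ n IH =>
  intro t t' ht s hts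
  obtain ⟨f, hf0, hfm, hfn, hterm⟩ := ht
  rcases n with _ | k
  · exact absurd hts ((hf0 ▸ hfn ▸ hterm : IsTerminal r t) s)
  have aux : ∀ (ℓ m : ℕ), m < k + 1 → ∀ (u v : T) (c : ℕ → T), MyTerm r u m v →
      c 0 = u → IsMoveSeq r c ℓ → ∃ k2, m = ℓ + k2 ∧ MyTerm r (c ℓ) k2 v := by
    intro ℓ
    induction ℓ with
    | zero =>
      intro m hm u v c htm hc0 _
      exact ⟨m, by omega, hc0 ▸ htm⟩
    | succ ℓ ih =>
      intro m hm u v c htm hc0 hcm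
      have h1 : r u (c 1) := hc0 ▸ hcm 0 (by omega)
      obtain ⟨k1, hk1, ht1⟩ := IH m hm u v htm (c 1) h1
      obtain ⟨k2, hk2, ht2⟩ := ih k1 (by omega) (c 1) v (fun i => c (i + 1)) ht1 rfl
        (fun i hi => hcm (i + 1) (by omega))
      exact ⟨k2, by omega, ht2⟩
  have hfshift : MyTerm r (f 1) k t' :=
    ⟨fun i => f (i + 1), rfl, fun i hi => hfm (i + 1) (by omega), hfn, hterm⟩
  have hmove1 : r t (f 1) := hf0 ▸ hfm 0 (by omega)
  rcases hp t s (f 1) hts hmove1 with ⟨ℓ, a, b, ha0, hb0, hma, hmb, hab⟩ | ⟨_, b, hb0, hbinf⟩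
  · obtain ⟨k2, hk2, ht2⟩ := aux ℓ k (by omega) (f 1) t' b hfshift hb0 hmb
    refine ⟨k, rfl, ?_⟩
    have : MyTerm r s (ℓ + k2) t' := my_term_concat ha0 hma (hab ▸ ht2)
    rwa [← hk2] at this
  · obtain ⟨k2, hk2, -⟩ := aux (k + 1) k (by omega) (f 1) t' b hfshift hb0
      (fun i _ => hbinf i)
    omega

/-- Any move sequence from a position terminating in `n` steps has length at
most `n`, and its endpoint terminates at the same terminal in the remaining
number of steps. -/
lemma my_term_seq {T : Type*} {r : T → T → Prop} (hp : PolygonProperty r) :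
    ∀ (ℓ n : ℕ) (t t' : T) (c : ℕ → T), MyTerm r t n t' → c 0 = t → IsMoveSeq r c ℓ →
      ∃ k, n = ℓ + k ∧ MyTerm r (c ℓ) k t' := by
  intro ℓ
  induction ℓ with
  | zero =>
    intro n t t' c htm hc0 _
    exact ⟨n, by omega, hc0 ▸ htm⟩
  | succ ℓ ih =>
    intro n t t' c htm hc0 hcm
    have h1 : r t (c 1) := hc0 ▸ hcm 0 (by omega)
    obtain ⟨k1, hk1, ht1⟩ := my_term_step hp n t t' htm (c 1) h1
    obtain ⟨k2, hk2, ht2⟩ := ih k1 (c 1) t' (fun i => c (i + 1)) ht1 rfl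
      (fun i hi => hcm (i + 1) (by omega))
    exact ⟨k2, by omega, ht2⟩

/-- Eriksson's lemma: a rewriting system has the strong convergence property iff
it has the polygon property. -/
theorem stmt_1 {T : Type*} (r : T → T → Prop) :
    StrongConvergence r ↔ PolygonProperty r := by
  constructor
  · -- StrongConvergence → PolygonProperty
    intro hsc t s s' hts hts'
    by_cases hs_inf : ∃ a : ℕ → T, a 0 = s ∧ ∀ i, r (a i) (a (i + 1))
    · by_cases hs'_inf : ∃ b : ℕ → T, b 0 = s' ∧ ∀ i, r (b i) (b (i + 1))
      · exact Or.inr ⟨hs_inf, hs'_inf⟩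
      · exfalso
        obtain ⟨m, g, hg0, hmg, hgt⟩ := my_exists_term r s' hs'_inf
        obtain ⟨h, hh0, hmh, hhe⟩ := my_prepend hts' hg0 hmg
        obtain ⟨hno, -⟩ := hsc t (m + 1) h hh0 hmh (hhe ▸ hgt)
        obtain ⟨a, ha0, ha⟩ := hs_inf
        exact hno (my_prepend_inf hts ha0 ha)
    · by_cases hs'_inf : ∃ b : ℕ → T, b 0 = s' ∧ ∀ i, r (b i) (b (i + 1))
      · exfalso
        obtain ⟨m, g, hg0, hmg, hgt⟩ := my_exists_term r s hs_inf
        obtain ⟨h, hh0, hmh, hhe⟩ := my_prepend hts hg0 hmg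
        obtain ⟨hno, -⟩ := hsc t (m + 1) h hh0 hmh (hhe ▸ hgt)
        obtain ⟨b, hb0, hb⟩ := hs'_inf
        exact hno (my_prepend_inf hts' hb0 hb)
      · obtain ⟨na, a, ha0, hma, hat⟩ := my_exists_term r s hs_inf
        obtain ⟨nb, b, hb0, hmb, hbt⟩ := my_exists_term r s' hs'_inf
        obtain ⟨A, hA0, hmA, hAe⟩ := my_prepend hts ha0 hma
        obtain ⟨B, hB0, hmB, hBe⟩ := my_prepend hts' hb0 hmb
        obtain ⟨-, huniq⟩ := hsc t (na + 1) A hA0 hmA (hAe ▸ hat)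
        obtain ⟨he, hlen⟩ := huniq (nb + 1) B hB0 hmB (hBe ▸ hbt)
        have hnab : nb = na := by omega
        subst hnab
        refine Or.inl ⟨nb, a, b, ha0, hb0, hma, hmb, ?_⟩
        rw [← hAe, ← hBe, he]
  · -- PolygonProperty → StrongConvergence
    intro hp t n f hf0 hfm hterm
    have htn : MyTerm r t n (f n) := ⟨f, hf0, hfm, rfl, hterm⟩
    constructor
    · rintro ⟨a, ha0, ha⟩
      obtain ⟨k, hk, -⟩ := my_term_seq hp (n + 1) n t (f n) a htn ha0 (fun i _ => ha i)
      omega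
    · intro m g hg0 hgm hgterm
      obtain ⟨k, hk, d, hd0, hmd, hdk, -⟩ := my_term_seq hp m n t (f n) g htn hg0 hgm
      rcases Nat.eq_zero_or_pos k with hk0 | hk0
      · subst hk0
        refine ⟨by rw [← hdk, hd0], by omega⟩
      · exact absurd (hd0 ▸ hmd 0 hk0) (hgterm (d 1))
end

section
/- Let Φ = φ_1 ∧ ⋯ ∧ φ_m be a formula over independent random variables X_1,…,X_n with product distribution D, where each clause φ_k depends only on the variables in its scope Scp(φ_k) ⊆ [n]. Define the dependency graph Γ on [m] by k ∼ ℓ iff Scp(φ_k) ∩ Scp(φ_ℓ) ≠ ∅. If Φ is extremal (for all k ≠ ℓ with k ∼ ℓ, φ_k ∨ φ_ℓ is a tautology), then Pr_D(Φ holds) = Σ_{I ∈ I(Γ)} (−1)^{|I|} ∏_{k∈I} Pr_D(¬φ_k). -/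
open Finset Classical in
private lemma indep_mul_aux {n : ℕ} (α : Fin n → Type*) [∀ i, Fintype (α i)]
    (w : ∀ i, α i → ℝ) (hw1 : ∀ i, ∑ a, w i a = 1)
    (A : Finset (Fin n)) (g h : (∀ i, α i) → ℝ)
    (hg : ∀ x y, (∀ i ∈ A, x i = y i) → g x = g y)
    (hh : ∀ x y, (∀ i ∉ A, x i = y i) → h x = h y) :
    (∑ x : ∀ i, α i, (∏ i, w i (x i)) * g x) * (∑ x : ∀ i, α i, (∏ i, w i (x i)) * h x)
    = ∑ x : ∀ i, α i, (∏ i, w i (x i)) * (g x * h x) := by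
  classical
  set z : (∀ i, α i) → (∀ i, α i) → (∀ i, α i) :=
    fun x y i => if i ∈ A then x i else y i with hzdef
  have hinv : ∀ x y : ∀ i, α i, z (z x y) (z y x) = x := by
    intro x y; funext i; by_cases hi : i ∈ A <;> simp [z, hi]
  let e : ((∀ i, α i) × (∀ i, α i)) ≃ ((∀ i, α i) × (∀ i, α i)) :=
    { toFun := fun p => (z p.1 p.2, z p.2 p.1)
      invFun := fun p => (z p.1 p.2, z p.2 p.1)
      left_inv := fun p => Prod.ext (hinv p.1 p.2) (hinv p.2 p.1)
      right_inv := fun p => Prod.ext (hinv p.1 p.2) (hinv p.2 p.1) }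
  have total : (∑ x : ∀ i, α i, ∏ i, w i (x i)) = 1 := by
    rw [← Fintype.prod_sum w]
    simp [hw1]
  calc (∑ x : ∀ i, α i, (∏ i, w i (x i)) * g x) * (∑ x : ∀ i, α i, (∏ i, w i (x i)) * h x)
      = ∑ p : (∀ i, α i) × (∀ i, α i),
          ((∏ i, w i (p.1 i)) * g p.1) * ((∏ i, w i (p.2 i)) * h p.2) := by
        rw [Finset.sum_mul_sum, Fintype.sum_prod_type]
    _ = ∑ p : (∀ i, α i) × (∀ i, α i),
          ((∏ i, w i ((e p).1 i)) * g (e p).1) * ((∏ i, w i ((e p).2 i)) * h (e p).2) := by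
        exact (Equiv.sum_comp e fun p =>
          ((∏ i, w i (p.1 i)) * g p.1) * ((∏ i, w i (p.2 i)) * h p.2)).symm
    _ = ∑ p : (∀ i, α i) × (∀ i, α i),
          ((∏ i, w i (p.1 i)) * (∏ i, w i (p.2 i))) * ((g p.1 * h p.1)) := by
        refine Fintype.sum_congr _ _ fun p => ?_
        obtain ⟨x, y⟩ := p
        have hgz : g (z x y) = g x := hg _ _ fun i hi => by simp [z, hi]
        have hhz : h (z y x) = h x := hh _ _ fun i hi => by simp [z, hi]
        have hwz : (∏ i, w i (z x y i)) * (∏ i, w i (z y x i))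
            = (∏ i, w i (x i)) * (∏ i, w i (y i)) := by
          rw [← Finset.prod_mul_distrib, ← Finset.prod_mul_distrib]
          refine Finset.prod_congr rfl fun i _ => ?_
          by_cases hi : i ∈ A <;> simp [z, hi, mul_comm]
        simp only [e, Equiv.coe_fn_mk]
        rw [hgz, hhz, mul_mul_mul_comm, hwz]
    _ = ∑ x : ∀ i, α i, (∏ i, w i (x i)) * (g x * h x) := by
        rw [Fintype.sum_prod_type]
        refine Fintype.sum_congr _ _ fun x => ?_
        calc ∑ y : ∀ i, α i, ((∏ i, w i (x i)) * (∏ i, w i (y i))) * (g x * h x)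
            = (∑ y : ∀ i, α i, ∏ i, w i (y i)) * ((∏ i, w i (x i)) * (g x * h x)) := by
              rw [Finset.sum_mul]; exact Fintype.sum_congr _ _ fun y => by ring
          _ = (∏ i, w i (x i)) * (g x * h x) := by rw [total, one_mul]


open Finset Classical in
private lemma total_mass {n : ℕ} (α : Fin n → Type*) [∀ i, Fintype (α i)]
    (w : ∀ i, α i → ℝ) (hw1 : ∀ i, ∑ a, w i a = 1) :
    (∑ x : ∀ i, α i, ∏ i, w i (x i)) = 1 := by
  rw [← Fintype.prod_sum w]; simp [hw1]

open Finset Classical in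
private lemma prob_indep {n m : ℕ} (α : Fin n → Type*) [∀ i, Fintype (α i)]
    (w : ∀ i, α i → ℝ) (hw1 : ∀ i, ∑ a, w i a = 1)
    (Scp : Fin m → Finset (Fin n)) (φ : Fin m → (∀ i, α i) → Prop)
    (hdep : ∀ k x y, (∀ i ∈ Scp k, x i = y i) → (φ k x ↔ φ k y))
    (t : Finset (Fin m))
    (hind : ∀ k ∈ t, ∀ ℓ ∈ t, k ≠ ℓ → ¬ (Scp k ∩ Scp ℓ).Nonempty) :
    ∑ x : ∀ i, α i, (∏ i, w i (x i)) * ∏ k ∈ t, (if φ k x then (0:ℝ) else 1)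
    = ∏ k ∈ t, ∑ x : ∀ i, α i, (∏ i, w i (x i)) * (if φ k x then (0:ℝ) else 1) := by
  classical
  induction t using Finset.induction_on with
  | empty => simp [total_mass α w hw1]
  | @insert k t hk ih =>
    have hind' : ∀ k ∈ t, ∀ ℓ ∈ t, k ≠ ℓ → ¬ (Scp k ∩ Scp ℓ).Nonempty :=
      fun a ha b hb => hind a (mem_insert_of_mem ha) b (mem_insert_of_mem hb)
    have hg : ∀ x y : ∀ i, α i, (∀ i ∈ Scp k, x i = y i) →
        (if φ k x then (0:ℝ) else 1) = (if φ k y then (0:ℝ) else 1) := by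
      intro x y hxy
      simp only [hdep k x y hxy]
    have hh : ∀ x y : ∀ i, α i, (∀ i ∉ Scp k, x i = y i) →
        (∏ k' ∈ t, (if φ k' x then (0:ℝ) else 1))
        = ∏ k' ∈ t, (if φ k' y then (0:ℝ) else 1) := by
      intro x y hxy
      refine Finset.prod_congr rfl fun k' hk' => ?_
      have hne : k' ≠ k := fun h => hk (h ▸ hk')
      have hdisj : ¬ (Scp k' ∩ Scp k).Nonempty :=
        hind k' (mem_insert_of_mem hk') k (mem_insert_self k t) hne
      have : ∀ i ∈ Scp k', x i = y i := by
        intro i hi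
        refine hxy i fun hik => hdisj ⟨i, Finset.mem_inter.2 ⟨hi, hik⟩⟩
      simp only [hdep k' x y this]
    calc ∑ x : ∀ i, α i, (∏ i, w i (x i)) * ∏ k' ∈ insert k t, (if φ k' x then (0:ℝ) else 1)
        = ∑ x : ∀ i, α i, (∏ i, w i (x i)) *
            ((if φ k x then (0:ℝ) else 1) * ∏ k' ∈ t, (if φ k' x then (0:ℝ) else 1)) := by
          refine Fintype.sum_congr _ _ fun x => ?_
          rw [Finset.prod_insert hk]
      _ = (∑ x : ∀ i, α i, (∏ i, w i (x i)) * (if φ k x then (0:ℝ) else 1)) *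
            (∑ x : ∀ i, α i, (∏ i, w i (x i)) * ∏ k' ∈ t, (if φ k' x then (0:ℝ) else 1)) :=
          (indep_mul_aux α w hw1 (Scp k) _ _ hg hh).symm
      _ = ∏ k' ∈ insert k t, ∑ x : ∀ i, α i,
            (∏ i, w i (x i)) * (if φ k' x then (0:ℝ) else 1) := by
          rw [ih hind', Finset.prod_insert hk]

open Finset Classical in
/-- For an extremal instance `Φ = φ_1 ∧ ⋯ ∧ φ_m` over a product distribution,
the probability that `Φ` holds equals the signed independent-set polynomial of
the dependency graph evaluated at the probabilities `Pr(¬φ_k)`. -/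
theorem stmt_3 {n m : ℕ} (α : Fin n → Type*) [∀ i, Fintype (α i)]
    (w : ∀ i, α i → ℝ) (hw0 : ∀ i a, 0 ≤ w i a) (hw1 : ∀ i, ∑ a, w i a = 1)
    (Scp : Fin m → Finset (Fin n)) (φ : Fin m → (∀ i, α i) → Prop)
    (hdep : ∀ k x y, (∀ i ∈ Scp k, x i = y i) → (φ k x ↔ φ k y))
    (hext : ∀ k ℓ, k ≠ ℓ → (Scp k ∩ Scp ℓ).Nonempty → ∀ x, φ k x ∨ φ ℓ x) :
    ∑ x ∈ univ.filter (fun x : ∀ i, α i => ∀ k, φ k x), ∏ i, w i (x i)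
    = ∑ I ∈ univ.filter (fun I : Finset (Fin m) =>
          ∀ k ∈ I, ∀ ℓ ∈ I, k ≠ ℓ → ¬ (Scp k ∩ Scp ℓ).Nonempty),
        (-1 : ℝ) ^ I.card *
          ∏ k ∈ I, ∑ x ∈ univ.filter (fun x : ∀ i, α i => ¬ φ k x), ∏ i, w i (x i) := by
  classical
  have lhs1 : (∑ x ∈ univ.filter (fun x : ∀ i, α i => ∀ k, φ k x), ∏ i, w i (x i))
      = ∑ x : ∀ i, α i, (∏ i, w i (x i)) * ∏ k, (1 - if φ k x then (0:ℝ) else 1) := by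
    rw [Finset.sum_filter]
    refine Fintype.sum_congr _ _ fun x => ?_
    by_cases hx : ∀ k, φ k x
    · simp [hx]
    · rw [if_neg hx]
      push_neg at hx; obtain ⟨k, hk⟩ := hx
      rw [Finset.prod_eq_zero (Finset.mem_univ k) (by simp [hk]), mul_zero]
  have expand : ∀ x : ∀ i, α i, (∏ k, (1 - if φ k x then (0:ℝ) else 1))
      = ∑ t : Finset (Fin m), (-1:ℝ)^t.card * ∏ k ∈ t, (if φ k x then (0:ℝ) else 1) := by
    intro x
    calc ∏ k, (1 - if φ k x then (0:ℝ) else 1)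
        = ∏ k, ((-(if φ k x then (0:ℝ) else 1)) + 1) :=
          Finset.prod_congr rfl fun k _ => by ring
      _ = ∑ t : Finset (Fin m),
            (∏ k ∈ t, -(if φ k x then (0:ℝ) else 1)) * ∏ k ∈ tᶜ, (1:ℝ) :=
          Fintype.prod_add _ _
      _ = ∑ t : Finset (Fin m), (-1:ℝ)^t.card * ∏ k ∈ t, (if φ k x then (0:ℝ) else 1) := by
          refine Fintype.sum_congr _ _ fun t => ?_
          calc (∏ k ∈ t, -(if φ k x then (0:ℝ) else 1)) * ∏ k ∈ tᶜ, (1:ℝ)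
              = ∏ k ∈ t, (-1:ℝ) * (if φ k x then (0:ℝ) else 1) := by
                rw [Finset.prod_const_one, mul_one]
                exact Finset.prod_congr rfl fun k _ => by ring
            _ = (-1:ℝ)^t.card * ∏ k ∈ t, (if φ k x then (0:ℝ) else 1) := by
                rw [Finset.prod_mul_distrib, Finset.prod_const]
  rw [lhs1]
  simp only [expand]
  have swap : ∑ x : ∀ i, α i, (∏ i, w i (x i)) *
        ∑ t : Finset (Fin m), (-1:ℝ)^t.card * ∏ k ∈ t, (if φ k x then (0:ℝ) else 1)
      = ∑ t : Finset (Fin m), (-1:ℝ)^t.card *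
          ∑ x : ∀ i, α i, (∏ i, w i (x i)) * ∏ k ∈ t, (if φ k x then (0:ℝ) else 1) := by
    simp_rw [Finset.mul_sum]
    rw [Finset.sum_comm]
    refine Fintype.sum_congr _ _ fun t => ?_
    exact Fintype.sum_congr _ _ fun x => by ring
  rw [swap, Finset.sum_filter]
  refine Fintype.sum_congr _ _ fun t => ?_
  by_cases ht : ∀ k ∈ t, ∀ ℓ ∈ t, k ≠ ℓ → ¬ (Scp k ∩ Scp ℓ).Nonempty
  · rw [if_pos ht, prob_indep α w hw1 Scp φ hdep t ht]
    congr 1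
    refine Finset.prod_congr rfl fun k _ => ?_
    rw [Finset.sum_filter]
    refine Fintype.sum_congr _ _ fun x => ?_
    by_cases hx : φ k x <;> simp [hx]
  · rw [if_neg ht]
    push_neg at ht
    obtain ⟨k, hkt, ℓ, hlt, hkl, hnon⟩ := ht
    have hz : ∀ x : ∀ i, α i, (∏ k' ∈ t, (if φ k' x then (0:ℝ) else 1)) = 0 := by
      intro x
      rcases hext k ℓ hkl hnon x with h | h
      · exact Finset.prod_eq_zero hkt (by simp [h])
      · exact Finset.prod_eq_zero hlt (by simp [h])
    simp [hz]
end

section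
/- Let G be a graph with vertex set {v_1,…,v_m} admitting a sink-free orientation. Then the number of orientations of G with exactly one sink is at most m² times the number of sink-free orientations of G. -/
/-- `o` encodes an orientation of the graph `G`: every edge of `G` receives
exactly one direction, and non-edges receive none. -/
def IsOrientation {V : Type*} (G : SimpleGraph V) (o : V → V → Bool) : Prop :=
  ∀ u v, (G.Adj u v → (o u v = true ↔ o v u = false)) ∧
    (¬ G.Adj u v → o u v = false)

/-- `v` is a sink of the orientation `o`: every edge incident to `v` is
directed towards `v`. -/
def IsSink {V : Type*} (G : SimpleGraph V) (o : V → V → Bool) (v : V) : Prop :=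
  ∀ u, G.Adj u v → o u v = true

namespace Stmt6Aux

open Classical in
noncomputable def pflip {m : ℕ} (f : Fin m → Fin m) (k : Fin m)
    (o : Fin m → Fin m → Bool) (T : ℕ) (x y : Fin m) : Bool :=
  if ∃ i < T, x = f^[i] k ∧ y = f^[i+1] k then true
  else if ∃ i < T, y = f^[i] k ∧ x = f^[i+1] k then false
  else o x y

variable {m : ℕ} {f : Fin m → Fin m} {k : Fin m} {o : Fin m → Fin m → Bool} {T : ℕ}

lemma norev (hA2 : ∀ v, f (f v) ≠ v) (i j : ℕ) :
    ¬(f^[i] k = f^[j+1] k ∧ f^[i+1] k = f^[j] k) := by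
  rintro ⟨h1, h2⟩
  apply hA2 (f^[i] k)
  calc f (f (f^[i] k)) = f (f^[i+1] k) := by rw [Function.iterate_succ_apply']
    _ = f (f^[j] k) := by rw [h2]
    _ = f^[j+1] k := by rw [Function.iterate_succ_apply']
    _ = f^[i] k := h1.symm

lemma pflip_fwd {i : ℕ} (hi : i < T) : pflip f k o T (f^[i] k) (f^[i+1] k) = true := by
  unfold pflip
  rw [if_pos ⟨i, hi, rfl, rfl⟩]

lemma pflip_bwd (hA2 : ∀ v, f (f v) ≠ v) {i : ℕ} (hi : i < T) :
    pflip f k o T (f^[i+1] k) (f^[i] k) = false := by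
  unfold pflip
  rw [if_neg, if_pos ⟨i, hi, rfl, rfl⟩]
  rintro ⟨j, _, h1, h2⟩
  exact norev hA2 i j ⟨h2, h1⟩

lemma pflip_off {x y : Fin m} (hx : ¬∃ i < T, x = f^[i] k ∧ y = f^[i+1] k)
    (hy : ¬∃ i < T, y = f^[i] k ∧ x = f^[i+1] k) : pflip f k o T x y = o x y := by
  unfold pflip
  rw [if_neg hx, if_neg hy]

lemma pflip_zero {x y : Fin m} : pflip f k o 0 x y = o x y := by
  refine pflip_off ?_ ?_ <;> rintro ⟨i, hi, -⟩ <;> omega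

lemma pflip_notmem {v : Fin m} (hv : ∀ i ≤ T, v ≠ f^[i] k) (u : Fin m) :
    pflip f k o T u v = o u v := by
  refine pflip_off ?_ ?_
  · rintro ⟨i, hi, -, h⟩
    exact hv (i+1) hi h
  · rintro ⟨i, hi, h, -⟩
    exact hv i hi.le h

variable {G : SimpleGraph (Fin m)}

lemma adjp (hA1 : ∀ v, G.Adj v (f v)) (i : ℕ) : G.Adj (f^[i] k) (f^[i+1] k) := by
  rw [Function.iterate_succ_apply']
  exact hA1 _

lemma pflip_orientation (hA1 : ∀ v, G.Adj v (f v)) (hA2 : ∀ v, f (f v) ≠ v)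
    (ho : IsOrientation G o) : IsOrientation G (pflip f k o T) := by
  intro u v
  constructor
  · intro hadj
    by_cases h1 : ∃ i < T, u = f^[i] k ∧ v = f^[i+1] k
    · obtain ⟨i, hi, hu, hv⟩ := h1
      subst hu hv
      rw [pflip_fwd hi, pflip_bwd hA2 hi]
      simp
    · by_cases h2 : ∃ i < T, v = f^[i] k ∧ u = f^[i+1] k
      · obtain ⟨i, hi, hv, hu⟩ := h2
        subst hu hv
        rw [pflip_fwd hi, pflip_bwd hA2 hi]
        simp
      · rw [pflip_off h1 h2, pflip_off h2 h1]
        exact (ho u v).1 hadj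
  · intro hadj
    have h1 : ¬∃ i < T, u = f^[i] k ∧ v = f^[i+1] k := by
      rintro ⟨i, hi, hu, hv⟩
      subst hu hv
      exact hadj (adjp hA1 i)
    have h2 : ¬∃ i < T, v = f^[i] k ∧ u = f^[i+1] k := by
      rintro ⟨i, hi, hv, hu⟩
      subst hu hv
      exact hadj ((adjp hA1 i).symm)
    rw [pflip_off h1 h2]
    exact (ho u v).2 hadj

lemma pflip_notsink (hA1 : ∀ v, G.Adj v (f v)) (hA2 : ∀ v, f (f v) ≠ v)
    {i : ℕ} (hi : i < T) : ¬ IsSink G (pflip f k o T) (f^[i] k) := by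
  intro hs
  have := hs (f^[i+1] k) (adjp hA1 i).symm
  rw [pflip_bwd hA2 hi] at this
  exact Bool.false_ne_true this

lemma main_mem (hA1 : ∀ v, G.Adj v (f v)) (hA2 : ∀ v, f (f v) ≠ v)
    (hor : IsOrientation G o) (hsink : IsSink G o k)
    (huniq : ∀ v, IsSink G o v → v = k)
    (hQT : ¬ IsSink G (pflip f k o T) (f^[T] k)) :
    IsOrientation G (pflip f k o T) ∧ ∀ v, ¬ IsSink G (pflip f k o T) v := by
  refine ⟨pflip_orientation hA1 hA2 hor, ?_⟩
  intro v hsv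
  by_cases hv : ∃ i ≤ T, v = f^[i] k
  · obtain ⟨i, hiT, rfl⟩ := hv
    rcases lt_or_eq_of_le hiT with h | h
    · exact pflip_notsink hA1 hA2 h hsv
    · rw [h] at hsv
      exact hQT hsv
  · push_neg at hv
    have hvs : IsSink G o v := by
      intro u hadj
      have h := hsv u hadj
      rwa [pflip_notmem (fun i hi => hv i hi) u] at h
    exact hv 0 (Nat.zero_le _) (huniq v hvs)

lemma main_vals (hA1 : ∀ v, G.Adj v (f v)) (hA2 : ∀ v, f (f v) ≠ v)
    (hor : IsOrientation G o)
    (hdistT : ∀ i j : ℕ, i < j → j < T → f^[i] k ≠ f^[j] k)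
    (hQmin : ∀ n < T, IsSink G (pflip f k o n) (f^[n] k)) :
    ∀ i < T, o (f^[i+1] k) (f^[i] k) = true ∧ o (f^[i] k) (f^[i+1] k) = false := by
  intro i hi
  have h1 : pflip f k o i (f^[i+1] k) (f^[i] k) = o (f^[i+1] k) (f^[i] k) := by
    refine pflip_off ?_ ?_
    · rintro ⟨j, hj, e1, e2⟩
      exact norev hA2 i j ⟨e2, e1⟩
    · rintro ⟨j, hj, e1, e2⟩
      exact hdistT j i (by omega) hi e1.symm
  have htrue : o (f^[i+1] k) (f^[i] k) = true := by
    rw [← h1]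
    exact hQmin i hi (f^[i+1] k) (adjp hA1 i).symm
  refine ⟨htrue, ?_⟩
  have hiff := (hor (f^[i] k) (f^[i+1] k)).1 (adjp hA1 i)
  cases hc : o (f^[i] k) (f^[i+1] k)
  · rfl
  · rw [hiff.mp hc] at htrue
    exact absurd htrue (by simp)

lemma main_inj {o₁ o₂ : Fin m → Fin m → Bool}
    (hv1 : ∀ i < T, o₁ (f^[i+1] k) (f^[i] k) = true ∧ o₁ (f^[i] k) (f^[i+1] k) = false)
    (hv2 : ∀ i < T, o₂ (f^[i+1] k) (f^[i] k) = true ∧ o₂ (f^[i] k) (f^[i+1] k) = false)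
    (h : pflip f k o₁ T = pflip f k o₂ T) : o₁ = o₂ := by
  funext x y
  by_cases h1 : ∃ i < T, x = f^[i] k ∧ y = f^[i+1] k
  · obtain ⟨i, hi, rfl, rfl⟩ := h1
    rw [(hv1 i hi).2, (hv2 i hi).2]
  · by_cases h2 : ∃ i < T, y = f^[i] k ∧ x = f^[i+1] k
    · obtain ⟨i, hi, rfl, rfl⟩ := h2
      rw [(hv1 i hi).1, (hv2 i hi).1]
    · have e1 := pflip_off (o := o₁) (T := T) h1 h2
      have e2 := pflip_off (o := o₂) (T := T) h1 h2
      rw [← e1, ← e2, h]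

open Classical in
noncomputable def Kv {m : ℕ} (hm : 0 < m) (G : SimpleGraph (Fin m))
    (o : Fin m → Fin m → Bool) : Fin m :=
  if h : ∃ v, IsSink G o v then h.choose else ⟨0, hm⟩

lemma Kv_spec {m : ℕ} (hm : 0 < m) (G : SimpleGraph (Fin m))
    {o : Fin m → Fin m → Bool} (h : ∃! v, IsSink G o v) :
    IsSink G o (Kv hm G o) ∧ ∀ v, IsSink G o v → v = Kv hm G o := by
  obtain ⟨v, hv, hu⟩ := h
  have hex : ∃ v, IsSink G o v := ⟨v, hv⟩
  constructor
  · rw [Kv, dif_pos hex]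
    exact hex.choose_spec
  · intro w hw
    rw [Kv, dif_pos hex]
    exact (hu w hw).trans (hu _ hex.choose_spec).symm

end Stmt6Aux

open Finset Classical in
/-- If a graph on `m` vertices admits a sink-free orientation, then the number
of orientations with exactly one sink is at most `m²` times the number of
sink-free orientations. -/
theorem stmt_6 {m : ℕ} (G : SimpleGraph (Fin m))
    (hsf : ∃ o : Fin m → Fin m → Bool, IsOrientation G o ∧ ∀ v, ¬ IsSink G o v) :
    (univ.filter (fun o : Fin m → Fin m → Bool =>
        IsOrientation G o ∧ ∃! v, IsSink G o v)).card ≤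
      m ^ 2 * (univ.filter (fun o : Fin m → Fin m → Bool =>
        IsOrientation G o ∧ ∀ v, ¬ IsSink G o v)).card := by
  classical
  obtain ⟨ostar, host, hostf⟩ := hsf
  -- a successor function along `ostar`
  have hex : ∀ v, ∃ u, G.Adj v u ∧ ostar v u = true := by
    intro v
    have h := hostf v
    simp only [IsSink, not_forall] at h
    obtain ⟨u, hu, hne⟩ := h
    refine ⟨u, hu.symm, ?_⟩
    have hfalse : ostar u v = false := by
      cases hval : ostar u v
      · rfl
      · exact absurd hval hne
    exact ((host v u).1 hu.symm).mpr hfalse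
  choose f hA1 hfo using hex
  have hA2 : ∀ v, f (f v) ≠ v := by
    intro v h
    have h1 := hfo v
    have h2 := hfo (f v)
    rw [h] at h2
    have h3 := ((host v (f v)).1 (hA1 v)).mp h1
    rw [h2] at h3
    exact absurd h3 (by simp)
  rcases Nat.eq_zero_or_pos m with hm | hm
  · subst hm
    have hempty : (univ.filter (fun o : Fin 0 → Fin 0 → Bool =>
        IsOrientation G o ∧ ∃! v, IsSink G o v)) = ∅ := by
      refine Finset.filter_eq_empty_iff.mpr ?_
      rintro o - ⟨-, v, -⟩
      exact v.elim0
    simp [hempty]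
  -- pigeonhole: the forward path eventually repeats
  have hRex : ∀ k : Fin m, ∃ n, ∃ r < n, f^[n] k = f^[r] k := by
    intro k
    obtain ⟨i, j, hne, heqij⟩ := Fintype.exists_ne_map_eq_of_card_lt
      (fun i : Fin (m+1) => f^[(i : ℕ)] k) (by simp)
    rcases lt_or_gt_of_ne hne with h | h
    · exact ⟨j, ⟨i, Fin.lt_def.mp h, heqij.symm⟩⟩
    · exact ⟨i, ⟨j, Fin.lt_def.mp h, heqij⟩⟩
  have hdist : ∀ (k : Fin m) (i j : ℕ), i < j → j < Nat.find (hRex k) →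
      f^[i] k ≠ f^[j] k := by
    intro k i j hij hj heq
    exact Nat.find_min (hRex k) hj ⟨i, hij, heq.symm⟩
  have hT0le : ∀ k : Fin m, Nat.find (hRex k) ≤ m := by
    intro k
    have hinj : Function.Injective
        (fun i : Fin (Nat.find (hRex k)) => f^[(i : ℕ)] k) := by
      intro i j hij
      by_contra hne
      rcases lt_or_gt_of_ne hne with h | h
      · exact hdist k i j (Fin.lt_def.mp h) j.isLt hij
      · exact hdist k j i (Fin.lt_def.mp h) i.isLt hij.symm
    simpa using Fintype.card_le_of_injective _ hinj
  -- the process terminates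
  have hQT0 : ∀ (o : Fin m → Fin m → Bool) (k : Fin m),
      ¬ IsSink G (Stmt6Aux.pflip f k o (Nat.find (hRex k))) (f^[Nat.find (hRex k)] k) := by
    intro o k
    obtain ⟨r, hr, heqr⟩ := Nat.find_spec (hRex k)
    rw [heqr]
    exact Stmt6Aux.pflip_notsink hA1 hA2 hr
  have hQex : ∀ (o : Fin m → Fin m → Bool) (k : Fin m),
      ∃ n, ¬ IsSink G (Stmt6Aux.pflip f k o n) (f^[n] k) :=
    fun o k => ⟨Nat.find (hRex k), hQT0 o k⟩
  have hTle : ∀ (o : Fin m → Fin m → Bool) (k : Fin m),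
      Nat.find (hQex o k) ≤ Nat.find (hRex k) :=
    fun o k => Nat.find_min' _ (hQT0 o k)
  have hlt : ∀ (o : Fin m → Fin m → Bool) (k : Fin m),
      Nat.find (hQex o k) - 1 < m := by
    intro o k
    have := hTle o k
    have := hT0le k
    omega
  have hQmin : ∀ (o : Fin m → Fin m → Bool) (k : Fin m),
      ∀ n < Nat.find (hQex o k), IsSink G (Stmt6Aux.pflip f k o n) (f^[n] k) :=
    fun o k n hn => not_not.mp (Nat.find_min (hQex o k) hn)
  have hdistT : ∀ (o : Fin m → Fin m → Bool) (k : Fin m) (i j : ℕ),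
      i < j → j < Nat.find (hQex o k) → f^[i] k ≠ f^[j] k :=
    fun o k i j hij hj => hdist k i j hij (lt_of_lt_of_le hj (hTle o k))
  -- T ≥ 1 for orientations with a sink at Kv
  have hT1 : ∀ o : Fin m → Fin m → Bool, (∃! v, IsSink G o v) →
      1 ≤ Nat.find (hQex o (Stmt6Aux.Kv hm G o)) := by
    intro o hu
    by_contra hc
    have h0 : Nat.find (hQex o (Stmt6Aux.Kv hm G o)) = 0 := by omega
    have := Nat.find_spec (hQex o (Stmt6Aux.Kv hm G o))
    rw [h0] at this
    apply this
    intro u hadj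
    rw [Stmt6Aux.pflip_zero]
    exact (Stmt6Aux.Kv_spec hm G hu).1 u hadj
  refine le_trans (Finset.card_le_card_of_injOn
    (t := (Finset.filter (fun o : Fin m → Fin m → Bool =>
      IsOrientation G o ∧ ∀ v, ¬ IsSink G o v) Finset.univ) ×ˢ
      (Finset.univ : Finset (Fin m × Fin m)))
    (fun o => (Stmt6Aux.pflip f (Stmt6Aux.Kv hm G o) o (Nat.find (hQex o (Stmt6Aux.Kv hm G o))),
      (Stmt6Aux.Kv hm G o,
        (⟨Nat.find (hQex o (Stmt6Aux.Kv hm G o)) - 1, hlt o _⟩ : Fin m))))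
    ?_ ?_) ?_
  · -- maps into sink-free orientations × univ
    intro o ho
    simp only [Finset.mem_coe, Finset.mem_filter, Finset.mem_univ, true_and] at ho
    obtain ⟨hor, hu⟩ := ho
    have hK := Stmt6Aux.Kv_spec hm G hu
    have hmm := Stmt6Aux.main_mem hA1 hA2 hor hK.1 hK.2
      (Nat.find_spec (hQex o (Stmt6Aux.Kv hm G o)))
    simp only [Finset.mem_coe, Finset.mem_product, Finset.mem_filter, Finset.mem_univ, true_and, and_true]
    exact hmm
  · -- injectivity
    intro o₁ ho₁ o₂ ho₂ heq
    simp only [Finset.coe_filter, Set.mem_setOf_eq, Finset.mem_univ, true_and] at ho₁ ho₂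
    obtain ⟨hor₁, hu₁⟩ := ho₁
    obtain ⟨hor₂, hu₂⟩ := ho₂
    have hk : Stmt6Aux.Kv hm G o₁ = Stmt6Aux.Kv hm G o₂ :=
      congrArg (fun p => p.2.1) heq
    have hc : Nat.find (hQex o₁ (Stmt6Aux.Kv hm G o₁)) - 1 =
        Nat.find (hQex o₂ (Stmt6Aux.Kv hm G o₂)) - 1 :=
      congrArg (fun p => (p.2.2 : Fin m).val) heq
    have hA : Stmt6Aux.pflip f (Stmt6Aux.Kv hm G o₁) o₁
          (Nat.find (hQex o₁ (Stmt6Aux.Kv hm G o₁))) =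
        Stmt6Aux.pflip f (Stmt6Aux.Kv hm G o₂) o₂
          (Nat.find (hQex o₂ (Stmt6Aux.Kv hm G o₂))) :=
      congrArg (fun p => p.1) heq
    have hT : Nat.find (hQex o₁ (Stmt6Aux.Kv hm G o₁)) =
        Nat.find (hQex o₂ (Stmt6Aux.Kv hm G o₂)) := by
      have := hT1 o₁ hu₁
      have := hT1 o₂ hu₂
      omega
    rw [← hk] at hA hT
    have hv1 := Stmt6Aux.main_vals hA1 hA2 hor₁
      (hdistT o₁ (Stmt6Aux.Kv hm G o₁)) (hQmin o₁ (Stmt6Aux.Kv hm G o₁))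
    have hv2 := Stmt6Aux.main_vals hA1 hA2 hor₂
      (hdistT o₂ (Stmt6Aux.Kv hm G o₁)) (hQmin o₂ (Stmt6Aux.Kv hm G o₁))
    rw [← hT] at hv2
    exact Stmt6Aux.main_inj hv1 hv2 (by rw [hA, hT])
  · -- counting
    rw [Finset.card_product]
    simp only [Finset.card_univ, Fintype.card_prod, Fintype.card_fin]
    ring_nf
    omega
end

section
/- Let G be a graph with a sink-free reference orientation and successor function f: [m] → [m] such that (v_k, v_{f(k)}) is a reference-oriented edge for every k. Starting from any orientation with a single sink at v_k, repeatedly flipping the edge from the current sink v_{f^t(k)} to v_{f^{t+1}(k)} terminates in at most m steps with a sink-free orientation: it is impossible for the sequence k, f(k), f²(k), … of repaired vertices to revisit a vertex while a sink still exists. -/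
/-- Reorient the edge `{a, b}` so that it points from `a` to `b`. -/
def flipEdge {V : Type*} [DecidableEq V] (o : V → V → Bool) (a b : V) :
    V → V → Bool :=
  fun u v => if u = a ∧ v = b then true else if u = b ∧ v = a then false else o u v

/-- The sequence of orientations obtained from `o` by flipping, at step `t`,
the edge from `f^[t] k` towards `f^[t+1] k`. -/
def repairSeq {V : Type*} [DecidableEq V] (o : V → V → Bool) (f : V → V)
    (k : V) : ℕ → (V → V → Bool)
  | 0 => o
  | t + 1 => flipEdge (repairSeq o f k t) (f^[t] k) (f^[t + 1] k)

section Aux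

variable {V : Type*} [DecidableEq V] {G : SimpleGraph V}

lemma flipEdge_ab (o : V → V → Bool) (a b : V) : flipEdge o a b a b = true := by
  simp [flipEdge]

lemma flipEdge_ba (o : V → V → Bool) {a b : V} (hab : a ≠ b) :
    flipEdge o a b b a = false := by
  simp [flipEdge, hab, hab.symm]

lemma flipEdge_other (o : V → V → Bool) {a b u v : V} (h1 : ¬(u = a ∧ v = b))
    (h2 : ¬(u = b ∧ v = a)) : flipEdge o a b u v = o u v := by
  simp [flipEdge, h1, h2]

lemma isOrientation_flipEdge {o : V → V → Bool} (ho : IsOrientation G o)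
    {a b : V} (hab : G.Adj a b) : IsOrientation G (flipEdge o a b) := by
  have hne : a ≠ b := hab.ne
  intro u v
  constructor
  · intro huv
    by_cases h1 : u = a ∧ v = b
    · obtain ⟨rfl, rfl⟩ := h1
      rw [flipEdge_ab, flipEdge_ba _ hne]
      simp
    · by_cases h2 : u = b ∧ v = a
      · obtain ⟨rfl, rfl⟩ := h2
        rw [flipEdge_ba _ hne, flipEdge_ab]
        simp
      · rw [flipEdge_other _ h1 h2, flipEdge_other _ (fun h => h2 ⟨h.2, h.1⟩)
          (fun h => h1 ⟨h.2, h.1⟩)]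
        exact ((ho u v).1 huv)
  · intro huv
    by_cases h1 : u = a ∧ v = b
    · obtain ⟨rfl, rfl⟩ := h1; exact absurd hab huv
    · by_cases h2 : u = b ∧ v = a
      · obtain ⟨rfl, rfl⟩ := h2; exact flipEdge_ba _ hne
      · rw [flipEdge_other _ h1 h2]; exact (ho u v).2 huv

omit [DecidableEq V] in
lemma ff_ne {ρ : V → V → Bool} (hρ : IsOrientation G ρ) {f : V → V}
    (hf : ∀ j, G.Adj j (f j) ∧ ρ j (f j) = true) (j : V) : f (f j) ≠ j := by
  intro h
  have h1 : ρ j (f j) = true := (hf j).2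
  have h2 : ρ (f j) (f (f j)) = true := (hf (f j)).2
  rw [h] at h2
  have h3 : ρ (f j) j = false := ((hρ j (f j)).1 (hf j).1).mp h1
  rw [h3] at h2
  exact absurd h2 (by simp)

end Aux

/-- Sink-popping: given a sink-free reference orientation `ρ` with successor
function `f` (so `(v_j, v_{f(j)})` is a reference-oriented edge for every `j`),
starting from any orientation whose unique sink is `k` and repeatedly flipping
the edge from `f^[t] k` to `f^[t+1] k` reaches a sink-free orientation within
at most `m` steps. -/
theorem stmt_8 {m : ℕ} (G : SimpleGraph (Fin m)) (ρ : Fin m → Fin m → Bool)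
    (hρ : IsOrientation G ρ) (hρsf : ∀ v, ¬ IsSink G ρ v)
    (f : Fin m → Fin m) (hf : ∀ j, G.Adj j (f j) ∧ ρ j (f j) = true)
    (o : Fin m → Fin m → Bool) (ho : IsOrientation G o)
    (k : Fin m) (hk : ∀ v, IsSink G o v ↔ v = k) :
    ∃ t ≤ m, ∀ v, ¬ IsSink G (repairSeq o f k t) v := by
  set R : ℕ → (Fin m → Fin m → Bool) := repairSeq o f k with hR
  have hRsucc : ∀ t, R (t + 1) = flipEdge (R t) (f^[t] k) (f^[t + 1] k) :=
    fun t => rfl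
  have hadj : ∀ t, G.Adj (f^[t] k) (f^[t + 1] k) := by
    intro t
    rw [Function.iterate_succ_apply']
    exact (hf _).1
  have hOr : ∀ t, IsOrientation G (R t) := by
    intro t
    induction t with
    | zero => exact ho
    | succ t ih => rw [hRsucc]; exact isOrientation_flipEdge ih (hadj t)
  have main : ∀ t, (∃ s ≤ t, ∀ v, ¬ IsSink G (R s) v) ∨
      ((∀ v, IsSink G (R t) v ↔ v = f^[t] k) ∧
        ∀ s ≤ t, ∀ s' ≤ t, f^[s] k = f^[s'] k → s = s') := by
    intro t
    induction t with
    | zero =>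
      right
      refine ⟨by simpa [hR, repairSeq] using hk, ?_⟩
      intro s hs s' hs' _
      omega
    | succ t ih =>
      rcases ih with ⟨s, hs, hsf⟩ | ⟨huniq, hinj⟩
      · exact Or.inl ⟨s, le_trans hs (Nat.le_succ t), hsf⟩
      by_cases hsink : ∃ v, IsSink G (R (t + 1)) v
      · right
        set a := f^[t] k with ha
        set b := f^[t + 1] k with hb
        have hab : G.Adj a b := hadj t
        have hne : a ≠ b := hab.ne
        -- every sink of R (t+1) equals b
        have hall : ∀ w, IsSink G (R (t + 1)) w → w = b := by
          intro w hw
          have hwa : w ≠ a := by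
            intro rfl'
            subst rfl'
            have := hw b hab.symm
            rw [hRsucc, flipEdge_ba _ hne] at this
            exact absurd this (by simp)
          by_contra hwb
          have hwt : IsSink G (R t) w := by
            intro u hu
            have := hw u hu
            rwa [hRsucc, flipEdge_other _ (fun h => hwb h.2) (fun h => hwa h.2)]
              at this
          exact hwa ((huniq w).mp hwt)
        obtain ⟨w, hw⟩ := hsink
        have hwb : w = b := hall w hw
        subst hwb
        refine ⟨fun v => ⟨hall v, fun hv => hv ▸ hw⟩, ?_⟩
        -- injectivity up to t+1
        have key : ∀ s' ≤ t, f^[t + 1] k ≠ f^[s'] k := by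
          intro s' hs' hrev
          rcases Nat.lt_or_ge s' t with hs't | hst
          · -- edge from f^[s'] k stays directed out
            have edge : ∀ r, s' + 1 ≤ r → r ≤ t + 1 →
                R r (f^[s'] k) (f^[s' + 1] k) = true := by
              intro r
              induction r with
              | zero => omega
              | succ r ihr =>
                intro h1 h2
                rcases Nat.lt_or_ge s' r with hlt | hge
                · rw [hRsucc]
                  by_cases c1 : f^[s'] k = f^[r] k ∧ f^[s' + 1] k = f^[r + 1] k
                  · simp [flipEdge, c1.1, c1.2]
                  · by_cases c2 : f^[s'] k = f^[r + 1] k ∧ f^[s' + 1] k = f^[r] k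
                    · exfalso
                      obtain ⟨e1, e2⟩ := c2
                      rcases Nat.lt_or_ge (r + 1) (t + 1) with hr1 | hr1
                      · have := hinj s' (by omega) (r + 1) (by omega) e1
                        omega
                      · have hrt : r = t := by omega
                        have hst' : s' + 1 = t := hinj (s' + 1) (by omega) t
                          (le_refl t) (by rw [← hrt]; exact e2)
                        -- f (f (f^[s'] k)) = f^[s'] k : contradiction
                        apply ff_ne hρ hf (f^[s'] k)
                        calc f (f (f^[s'] k)) = f (f^[s' + 1] k) := by
                              rw [Function.iterate_succ_apply']
                          _ = f (f^[t] k) := by rw [hst']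
                          _ = f^[t + 1] k := (Function.iterate_succ_apply' f t k).symm
                          _ = f^[s'] k := hrev
                    · rw [flipEdge_other _ c1 c2]
                      exact ihr (by omega) (by omega)
                · -- r = s'
                  have hr : r = s' := by omega
                  subst hr
                  rw [hRsucc]
                  exact flipEdge_ab _ _ _
            have hout : R (t + 1) (f^[s'] k) (f^[s' + 1] k) = true :=
              edge (t + 1) (by omega) (le_refl _)
            have hadj' : G.Adj (f^[s'] k) (f^[s' + 1] k) := hadj s'
            -- but f^[s'] k = b is a sink of R (t+1)
            have hin : R (t + 1) (f^[s' + 1] k) (f^[s'] k) = true := by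
              have := hw (f^[s' + 1] k) (by rw [hb, hrev]; exact hadj'.symm)
              rwa [hb, hrev] at this
            have := ((hOr (t + 1) (f^[s'] k) (f^[s' + 1] k)).1 hadj').mp hout
            rw [this] at hin
            exact absurd hin (by simp)
          · -- s' = t : then a = b
            have : s' = t := by omega
            subst this
            exact hne (hrev.symm)
        intro s hs s' hs' he
        by_cases h1 : s ≤ t <;> by_cases h2 : s' ≤ t
        · exact hinj s h1 s' h2 he
        · have : s' = t + 1 := by omega
          subst this
          exact absurd he.symm (key s h1)
        · have : s = t + 1 := by omega
          subst this
          exact absurd he (key s' h2)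
        · omega
      · exact Or.inl ⟨t + 1, le_refl _, fun v hv => hsink ⟨v, hv⟩⟩
  rcases main m with ⟨s, hs, hsf⟩ | ⟨_, hinj⟩
  · exact ⟨s, hs, hsf⟩
  · exfalso
    have hinjf : Function.Injective (fun i : Fin (m + 1) => f^[(i : ℕ)] k) := by
      intro i j hij
      exact Fin.ext (hinj i (by omega) j (by omega) hij)
    have := Fintype.card_le_of_injective _ hinjf
    simp at this
end

section
/- For n ≥ 2, the number of strong orientations of the ladder graph L_n = P_n □ P_2 equals 2 · 3^{n−2}. -/
/-- The orientation `o` is strong: between every ordered pair of vertices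
there is a directed path. -/
def IsStrongOrientation {V : Type*} (G : SimpleGraph V) (o : V → V → Bool) :
    Prop :=
  IsOrientation G o ∧
    ∀ u v : V, Relation.ReflTransGen (fun a b => o a b = true) u v

namespace Ladder

variable {n : ℕ}

abbrev L (n : ℕ) : SimpleGraph (Fin n × Fin 2) :=
  SimpleGraph.pathGraph n □ SimpleGraph.pathGraph 2

lemma ladder_adj (u v : Fin n × Fin 2) :
    (L n).Adj u v ↔
      (u.1 = v.1 ∧ u.2 ≠ v.2) ∨
        (u.2 = v.2 ∧ (u.1.val + 1 = v.1.val ∨ v.1.val + 1 = u.1.val)) := by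
  rw [SimpleGraph.boxProd_adj, SimpleGraph.pathGraph_adj, SimpleGraph.pathGraph_adj]
  constructor
  · rintro (⟨h1, h2⟩ | ⟨h1, h2⟩)
    · exact Or.inr ⟨h2, h1⟩
    · refine Or.inl ⟨h2, ?_⟩
      intro h; rw [h] at h1; omega
  · rintro (⟨h1, h2⟩ | ⟨h1, h2⟩)
    · refine Or.inr ⟨?_, h1⟩
      have h3 : u.2.val ≠ v.2.val := fun h => h2 (Fin.ext h)
      have := u.2.isLt; have := v.2.isLt
      omega
    · exact Or.inl ⟨h2, h1⟩

variable (o : Fin n × Fin 2 → Fin n × Fin 2 → Bool)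

/-- direction of the top rail from column `i` to `i+1`; `true` = rightward -/
def tt (i : ℕ) : Bool :=
  if h : i + 1 < n then o (⟨i, by omega⟩, 0) (⟨i + 1, h⟩, 0) else false

/-- direction of the bottom rail from column `i` to `i+1` -/
def bb (i : ℕ) : Bool :=
  if h : i + 1 < n then o (⟨i, by omega⟩, 1) (⟨i + 1, h⟩, 1) else false

/-- direction of the rung at column `i`; `true` = from row 0 to row 1 -/
def rr (i : ℕ) : Bool :=
  if h : i < n then o (⟨i, h⟩, 0) (⟨i, h⟩, 1) else false

lemma tt_eq {i : ℕ} (h : i + 1 < n) (h' : i < n) :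
    tt o i = o (⟨i, h'⟩, 0) (⟨i + 1, h⟩, 0) := by simp [tt, h]

lemma bb_eq {i : ℕ} (h : i + 1 < n) (h' : i < n) :
    bb o i = o (⟨i, h'⟩, 1) (⟨i + 1, h⟩, 1) := by simp [bb, h]

lemma rr_eq {i : ℕ} (h : i < n) :
    rr o i = o (⟨i, h⟩, 0) (⟨i, h⟩, 1) := by simp [rr, h]

variable {o}

lemma orient_rev (ho : IsOrientation (L n) o) {u v : Fin n × Fin 2}
    (h : (L n).Adj u v) : o v u = !o u v := by
  have h1 := (ho u v).1 h
  cases h2 : o u v <;> cases h3 : o v u <;> simp_all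

lemma adj_rail {i : ℕ} (h : i + 1 < n) (h' : i < n) (j : Fin 2) :
    (L n).Adj (⟨i, h'⟩, j) (⟨i + 1, h⟩, j) := by
  rw [ladder_adj]; right; exact ⟨rfl, Or.inl rfl⟩

lemma adj_rung {i : ℕ} (h : i < n) :
    (L n).Adj (⟨i, h⟩, 0) (⟨i, h⟩, 1) := by
  rw [ladder_adj]; left; exact ⟨rfl, by simp⟩

/-- The characterization of strong orientations. -/
def Chr (n : ℕ) (o : Fin n × Fin 2 → Fin n × Fin 2 → Bool) : Prop :=
  (∀ i, i + 1 < n → bb o i = !tt o i) ∧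
    rr o 0 = !tt o 0 ∧
    rr o (n - 1) = tt o (n - 2) ∧
    ∀ i, 0 < i → i + 1 < n → rr o i = tt o i → tt o (i - 1) = tt o i

end Ladder

namespace Ladder

variable {n : ℕ} {o : Fin n × Fin 2 → Fin n × Fin 2 → Bool}

def Reach (o : Fin n × Fin 2 → Fin n × Fin 2 → Bool) :
    Fin n × Fin 2 → Fin n × Fin 2 → Prop :=
  Relation.ReflTransGen (fun a b => o a b = true)

section Forward

set_option linter.unusedSectionVars false

variable (hn : 2 ≤ n) (ho : IsOrientation (L n) o) (hc : Chr n o)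

include hn ho hc

/-- step right on top: `o (i,0) (i+1,0) = true` when `tt o i = true` -/
lemma step_tt {i : ℕ} (h : i + 1 < n) (h' : i < n) (ht : tt o i = true) :
    o (⟨i, h'⟩, 0) (⟨i + 1, h⟩, 0) = true := by
  rw [← tt_eq o h h']; exact ht

lemma step_tt' {i : ℕ} (h : i + 1 < n) (h' : i < n) (ht : tt o i = false) :
    o (⟨i + 1, h⟩, 0) (⟨i, h'⟩, 0) = true := by
  rw [orient_rev ho ((adj_rail h h' 0)), ← tt_eq o h h', ht]; rfl

lemma step_bb {i : ℕ} (h : i + 1 < n) (h' : i < n) (ht : tt o i = false) :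
    o (⟨i, h'⟩, 1) (⟨i + 1, h⟩, 1) = true := by
  rw [← bb_eq o h h', hc.1 i h, ht]; rfl

lemma step_bb' {i : ℕ} (h : i + 1 < n) (h' : i < n) (ht : tt o i = true) :
    o (⟨i + 1, h⟩, 1) (⟨i, h'⟩, 1) = true := by
  rw [orient_rev ho ((adj_rail h h' 1)), ← bb_eq o h h', hc.1 i h, ht]; rfl

lemma step_rr {i : ℕ} (h : i < n) (hr : rr o i = true) :
    o (⟨i, h⟩, 0) (⟨i, h⟩, 1) = true := by
  rw [← rr_eq o h]; exact hr

lemma step_rr' {i : ℕ} (h : i < n) (hr : rr o i = false) :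
    o (⟨i, h⟩, 1) (⟨i, h⟩, 0) = true := by
  rw [orient_rev ho (adj_rung h), ← rr_eq o h, hr]; rfl

lemma goRight : ∀ k i (hik : i + k + 1 = n),
    (rr o i = true ∨ (i + 2 ≤ n ∧ tt o i = true)) →
    Reach o (⟨i, by omega⟩, 0) (⟨i, by omega⟩, 1) := by
  intro k
  induction k with
  | zero =>
    intro i hik hyp
    rcases hyp with hr | ⟨h2, ht⟩
    · exact Relation.ReflTransGen.single (step_rr hn ho hc (by omega) hr)
    · -- i = n - 1 and tt o i = true : impossible since tt o i = false (junk)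
      exfalso
      have : tt o i = false := by unfold tt; rw [dif_neg (by omega)]
      rw [this] at ht; simp at ht
  | succ k ih =>
    intro i hik hyp
    rcases hyp with hr | ⟨h2, ht⟩
    · exact Relation.ReflTransGen.single (step_rr hn ho hc (by omega) hr)
    · by_cases hr : rr o i = true
      · exact Relation.ReflTransGen.single (step_rr hn ho hc (by omega) hr)
      · have hr' : rr o i = false := by simpa using hr
        have h1 : i + 1 < n := by omega
        have hnext : rr o (i+1) = true ∨ (i + 3 ≤ n ∧ tt o (i+1) = true) := by
          by_contra hcon
          push_neg at hcon
          obtain ⟨hra, hrb⟩ := hcon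
          have hra' : rr o (i+1) = false := by simpa using hra
          by_cases hend : i + 2 = n
          · -- i+1 = n-1
            have := hc.2.2.1
            rw [show n - 1 = i + 1 by omega, show n - 2 = i by omega] at this
            rw [hra', ht] at this; simp at this
          · have h3 : i + 3 ≤ n := by omega
            have htb : tt o (i+1) = false := by simpa using hrb h3
            have := hc.2.2.2 (i+1) (by omega) (by omega) (by rw [hra', htb])
            rw [show i + 1 - 1 = i from rfl, ht, htb] at this
            simp at this
        have hmid := ih (i+1) (by omega) hnext
        refine Relation.ReflTransGen.head (step_tt hn ho hc h1 (by omega) ht) ?_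
        refine Relation.ReflTransGen.tail hmid ?_
        exact step_bb' hn ho hc h1 (by omega) ht

lemma goLeft : ∀ i (hik : i < n),
    (rr o i = true ∨ (0 < i ∧ tt o (i - 1) = false)) →
    Reach o (⟨i, hik⟩, 0) (⟨i, hik⟩, 1) := by
  intro i
  induction i with
  | zero =>
    intro hik hyp
    rcases hyp with hr | ⟨h2, _⟩
    · exact Relation.ReflTransGen.single (step_rr hn ho hc hik hr)
    · omega
  | succ i ih =>
    intro hik hyp
    rcases hyp with hr | ⟨_, ht⟩
    · exact Relation.ReflTransGen.single (step_rr hn ho hc hik hr)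
    · rw [show i + 1 - 1 = i from rfl] at ht
      have hprev : rr o i = true ∨ (0 < i ∧ tt o (i - 1) = false) := by
        by_contra hcon
        push_neg at hcon
        obtain ⟨hra, hrb⟩ := hcon
        have hra' : rr o i = false := by simpa using hra
        by_cases h0 : i = 0
        · subst h0
          have := hc.2.1
          rw [hra'] at this
          have : tt o 0 = true := by
            cases h : tt o 0
            · rw [h] at this; exact absurd this.symm (by simp)
            · rfl
          rw [this] at ht; simp at ht
        · have htb : tt o (i-1) = true := by simpa using hrb (by omega)
          have := hc.2.2.2 i (by omega) (by omega) (by rw [hra', ht])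
          rw [htb, ht] at this
          simp at this
      have hmid := ih (by omega) hprev
      refine Relation.ReflTransGen.head (step_tt' hn ho hc hik (by omega) ht) ?_
      refine Relation.ReflTransGen.tail hmid ?_
      exact step_bb hn ho hc hik (by omega) ht

lemma goRightB : ∀ k i (hik : i + k + 1 = n),
    (rr o i = false ∨ (i + 2 ≤ n ∧ tt o i = false)) →
    Reach o (⟨i, by omega⟩, 1) (⟨i, by omega⟩, 0) := by
  intro k
  induction k with
  | zero =>
    intro i hik hyp
    rcases hyp with hr | ⟨h2, ht⟩
    · exact Relation.ReflTransGen.single (step_rr' hn ho hc (by omega) hr)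
    · omega
  | succ k ih =>
    intro i hik hyp
    rcases hyp with hr | ⟨h2, ht⟩
    · exact Relation.ReflTransGen.single (step_rr' hn ho hc (by omega) hr)
    · by_cases hr : rr o i = false
      · exact Relation.ReflTransGen.single (step_rr' hn ho hc (by omega) hr)
      · have hr' : rr o i = true := by simpa using hr
        have h1 : i + 1 < n := by omega
        have hnext : rr o (i+1) = false ∨ (i + 3 ≤ n ∧ tt o (i+1) = false) := by
          by_contra hcon
          push_neg at hcon
          obtain ⟨hra, hrb⟩ := hcon
          have hra' : rr o (i+1) = true := by simpa using hra
          by_cases hend : i + 2 = n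
          · have := hc.2.2.1
            rw [show n - 1 = i + 1 by omega, show n - 2 = i by omega] at this
            rw [hra', ht] at this; simp at this
          · have h3 : i + 3 ≤ n := by omega
            have htb : tt o (i+1) = true := by simpa using hrb h3
            have := hc.2.2.2 (i+1) (by omega) (by omega) (by rw [hra', htb])
            rw [show i + 1 - 1 = i from rfl, ht, htb] at this
            simp at this
        have hmid := ih (i+1) (by omega) hnext
        refine Relation.ReflTransGen.head (step_bb hn ho hc h1 (by omega) ht) ?_
        refine Relation.ReflTransGen.tail hmid ?_
        exact step_tt' hn ho hc h1 (by omega) ht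

lemma goLeftB : ∀ i (hik : i < n),
    (rr o i = false ∨ (0 < i ∧ tt o (i - 1) = true)) →
    Reach o (⟨i, hik⟩, 1) (⟨i, hik⟩, 0) := by
  intro i
  induction i with
  | zero =>
    intro hik hyp
    rcases hyp with hr | ⟨h2, _⟩
    · exact Relation.ReflTransGen.single (step_rr' hn ho hc hik hr)
    · omega
  | succ i ih =>
    intro hik hyp
    rcases hyp with hr | ⟨_, ht⟩
    · exact Relation.ReflTransGen.single (step_rr' hn ho hc hik hr)
    · rw [show i + 1 - 1 = i from rfl] at ht
      have hprev : rr o i = false ∨ (0 < i ∧ tt o (i - 1) = true) := by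
        by_contra hcon
        push_neg at hcon
        obtain ⟨hra, hrb⟩ := hcon
        have hra' : rr o i = true := by simpa using hra
        by_cases h0 : i = 0
        · subst h0
          have h2 := hc.2.1
          rw [hra'] at h2
          have h3 : tt o 0 = false := by
            cases h : tt o 0
            · rfl
            · rw [h] at h2; exact absurd h2 (by simp)
          rw [h3] at ht; simp at ht
        · have htb : tt o (i-1) = false := by simpa using hrb (by omega)
          have := hc.2.2.2 i (by omega) (by omega) (by rw [hra', ht])
          rw [htb, ht] at this
          simp at this
      have hmid := ih (by omega) hprev
      refine Relation.ReflTransGen.head (step_bb' hn ho hc hik (by omega) ht) ?_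
      refine Relation.ReflTransGen.tail hmid ?_
      exact step_tt hn ho hc hik (by omega) ht

lemma cross : ∀ i (h : i < n), Reach o (⟨i, h⟩, 0) (⟨i, h⟩, 1) := by
  intro i h
  by_cases hr : rr o i = true
  · exact Relation.ReflTransGen.single (step_rr hn ho hc h hr)
  · have hr' : rr o i = false := by simpa using hr
    by_cases h0 : i = 0
    · subst h0
      have ht : tt o 0 = true := by
        have := hc.2.1; rw [hr'] at this
        cases h : tt o 0
        · rw [h] at this; exact absurd this.symm (by simp)
        · rfl
      exact goRight hn ho hc (n - 1) 0 (by omega) (Or.inr ⟨by omega, ht⟩)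
    · by_cases hlast : i + 1 = n
      · have ht : tt o (i - 1) = false := by
          have := hc.2.2.1
          rw [show n - 1 = i by omega, show n - 2 = i - 1 by omega, hr'] at this
          exact this.symm
        exact goLeft hn ho hc i h (Or.inr ⟨by omega, ht⟩)
      · cases ht : tt o i
        · have ht' : tt o (i - 1) = false := by
            have := hc.2.2.2 i (by omega) (by omega) (by rw [hr', ht])
            rw [ht] at this; exact this
          exact goLeft hn ho hc i h (Or.inr ⟨by omega, ht'⟩)
        · exact goRight hn ho hc (n - 1 - i) i (by omega) (Or.inr ⟨by omega, ht⟩)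

lemma crossB : ∀ i (h : i < n), Reach o (⟨i, h⟩, 1) (⟨i, h⟩, 0) := by
  intro i h
  by_cases hr : rr o i = false
  · exact Relation.ReflTransGen.single (step_rr' hn ho hc h hr)
  · have hr' : rr o i = true := by simpa using hr
    by_cases h0 : i = 0
    · subst h0
      have ht : tt o 0 = false := by
        have := hc.2.1; rw [hr'] at this
        cases h : tt o 0
        · rfl
        · rw [h] at this; exact absurd this (by simp)
      exact goRightB hn ho hc (n - 1) 0 (by omega) (Or.inr ⟨by omega, ht⟩)
    · by_cases hlast : i + 1 = n
      · have ht : tt o (i - 1) = true := by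
          have := hc.2.2.1
          rw [show n - 1 = i by omega, show n - 2 = i - 1 by omega, hr'] at this
          exact this.symm
        exact goLeftB hn ho hc i h (Or.inr ⟨by omega, ht⟩)
      · cases ht : tt o i
        · exact goRightB hn ho hc (n - 1 - i) i (by omega) (Or.inr ⟨by omega, ht⟩)
        · have ht' : tt o (i - 1) = true := by
            have := hc.2.2.2 i (by omega) (by omega) (by rw [hr', ht])
            rw [ht] at this; exact this
          exact goLeftB hn ho hc i h (Or.inr ⟨by omega, ht'⟩)

lemma crossAny : ∀ i (h : i < n) (j j' : Fin 2),
    Reach o (⟨i, h⟩, j) (⟨i, h⟩, j') := by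
  intro i h j j'
  fin_cases j <;> fin_cases j'
  · exact Relation.ReflTransGen.refl
  · exact cross hn ho hc i h
  · exact crossB hn ho hc i h
  · exact Relation.ReflTransGen.refl

lemma stepRight {i : ℕ} (h : i + 1 < n) (h' : i < n) (j : Fin 2) :
    Reach o (⟨i, h'⟩, j) (⟨i + 1, h⟩, j) := by
  fin_cases j
  · cases ht : tt o i
    · refine Relation.ReflTransGen.trans (cross hn ho hc i h') ?_
      refine Relation.ReflTransGen.head (step_bb hn ho hc h h' ht) ?_
      exact crossB hn ho hc (i+1) h
    · exact Relation.ReflTransGen.single (step_tt hn ho hc h h' ht)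
  · cases ht : tt o i
    · exact Relation.ReflTransGen.single (step_bb hn ho hc h h' ht)
    · refine Relation.ReflTransGen.trans (crossB hn ho hc i h') ?_
      refine Relation.ReflTransGen.head (step_tt hn ho hc h h' ht) ?_
      exact cross hn ho hc (i+1) h

lemma stepLeft {i : ℕ} (h : i + 1 < n) (h' : i < n) (j : Fin 2) :
    Reach o (⟨i + 1, h⟩, j) (⟨i, h'⟩, j) := by
  fin_cases j
  · cases ht : tt o i
    · exact Relation.ReflTransGen.single (step_tt' hn ho hc h h' ht)
    · refine Relation.ReflTransGen.trans (cross hn ho hc (i+1) h) ?_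
      refine Relation.ReflTransGen.head (step_bb' hn ho hc h h' ht) ?_
      exact crossB hn ho hc i h'
  · cases ht : tt o i
    · refine Relation.ReflTransGen.trans (crossB hn ho hc (i+1) h) ?_
      refine Relation.ReflTransGen.head (step_tt' hn ho hc h h' ht) ?_
      exact cross hn ho hc i h'
    · exact Relation.ReflTransGen.single (step_bb' hn ho hc h h' ht)

lemma reachRight : ∀ d i (h : i + d < n) (j : Fin 2),
    Reach o (⟨i, by omega⟩, j) (⟨i + d, h⟩, j) := by
  intro d
  induction d with
  | zero => intro i h j; exact Relation.ReflTransGen.refl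
  | succ d ih =>
    intro i h j
    refine Relation.ReflTransGen.trans (ih i (by omega) j) ?_
    have := stepRight hn ho hc (show (i + d) + 1 < n by omega) (by omega) j
    exact this

lemma reachLeft : ∀ d i (h : i + d < n) (j : Fin 2),
    Reach o (⟨i + d, h⟩, j) (⟨i, by omega⟩, j) := by
  intro d
  induction d with
  | zero => intro i h j; exact Relation.ReflTransGen.refl
  | succ d ih =>
    intro i h j
    refine Relation.ReflTransGen.trans ?_ (ih i (by omega) j)
    have := stepLeft hn ho hc (show (i + d) + 1 < n by omega) (by omega) j
    exact this

lemma reachAll : ∀ u v, Reach o u v := by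
  rintro ⟨⟨iu, hu⟩, ju⟩ ⟨⟨iv, hv⟩, jv⟩
  by_cases hle : iu ≤ iv
  · have h1 := reachRight hn ho hc (iv - iu) iu (by omega) ju
    have h2 : (⟨iu + (iv - iu), by omega⟩ : Fin n) = ⟨iv, hv⟩ := by
      ext; simp; omega
    rw [h2] at h1
    exact Relation.ReflTransGen.trans h1 (crossAny hn ho hc iv hv ju jv)
  · have h1 := reachLeft hn ho hc (iu - iv) iv (by omega) ju
    have h2 : (⟨iv + (iu - iv), by omega⟩ : Fin n) = ⟨iu, hu⟩ := by
      ext; simp; omega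
    rw [h2] at h1
    exact Relation.ReflTransGen.trans h1 (crossAny hn ho hc iv hv ju jv)

theorem chr_strong : IsStrongOrientation (L n) o :=
  ⟨ho, reachAll hn ho hc⟩

end Forward

end Ladder

namespace Ladder

variable {n : ℕ} {o : Fin n × Fin 2 → Fin n × Fin 2 → Bool}

section Backward

set_option linter.unusedSectionVars false

variable (hn : 2 ≤ n) (hs : IsStrongOrientation (L n) o)

include hn hs

lemma exists_in_edge (u : Fin n × Fin 2) :
    ∃ w, (L n).Adj w u ∧ o w u = true := by
  obtain ⟨ho, hr⟩ := hs
  set v : Fin n × Fin 2 := (u.1, ⟨1 - u.2.val, by omega⟩) with hv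
  have hne : v ≠ u := by
    intro h
    have := congrArg (fun x => x.2.val) h
    simp [hv] at this
    omega
  rcases (hr v u).cases_tail with h | ⟨c, _, hc⟩
  · exact absurd h.symm hne
  · refine ⟨c, ?_, hc⟩
    by_contra hadj
    rw [(ho c u).2 hadj] at hc
    exact Bool.false_ne_true hc

lemma exists_out_edge (u : Fin n × Fin 2) :
    ∃ w, (L n).Adj u w ∧ o u w = true := by
  obtain ⟨ho, hr⟩ := hs
  set v : Fin n × Fin 2 := (u.1, ⟨1 - u.2.val, by omega⟩) with hv
  have hne : u ≠ v := by
    intro h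
    have := congrArg (fun x => x.2.val) h
    simp [hv] at this
    omega
  rcases (hr u v).cases_head with h | ⟨c, hc, _⟩
  · exact absurd h hne
  · refine ⟨c, ?_, hc⟩
    by_contra hadj
    rw [(ho u c).2 hadj] at hc
    exact Bool.false_ne_true hc

/-- enumeration of neighbours of a top-row vertex -/
lemma adj_top {i : ℕ} (h : i < n) (w : Fin n × Fin 2)
    (hw : (L n).Adj w (⟨i, h⟩, 0)) :
    (w = (⟨i, h⟩, 1)) ∨
      (∃ h' : i + 1 < n, w = (⟨i + 1, h'⟩, 0)) ∨
      (∃ h' : i - 1 < n, 0 < i ∧ w = (⟨i - 1, h'⟩, 0)) := by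
  rw [ladder_adj] at hw
  obtain ⟨⟨wi, hwi⟩, wj⟩ := w
  rcases hw with ⟨h1, h2⟩ | ⟨h1, h2⟩
  · left
    simp only [Prod.mk.injEq]
    refine ⟨h1, ?_⟩
    simp at h1 h2 ⊢
    omega
  · simp only at h1 h2
    rcases h2 with h2 | h2
    · right; right
      refine ⟨by omega, by omega, ?_⟩
      simp only [Prod.mk.injEq]
      exact ⟨by ext; simp; omega, h1⟩
    · right; left
      refine ⟨by omega, ?_⟩
      simp only [Prod.mk.injEq]
      exact ⟨by ext; simp; omega, h1⟩

lemma no_source {i : ℕ} (h : i < n)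
    (h1 : rr o i = false) (h2 : i + 1 < n → tt o i = false)
    (h3 : 0 < i → tt o (i-1) = true) : False := by
  obtain ⟨w, hadj, hw⟩ := exists_out_edge hn hs (⟨i, h⟩, 0)
  have ho := hs.1
  rcases adj_top hn hs h w hadj.symm with hw' | ⟨h', hw'⟩ | ⟨h', h0, hw'⟩
  · subst hw'
    rw [← rr_eq o h, h1] at hw
    exact Bool.false_ne_true hw
  · subst hw'
    rw [← tt_eq o h' h, h2 h'] at hw
    exact Bool.false_ne_true hw
  · subst hw'
    have hadj2 : (L n).Adj (⟨i-1, h'⟩, 0) (⟨(i-1)+1, by omega⟩, 0) := adj_rail (by omega) h' 0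
    have : (⟨(i-1)+1, by omega⟩ : Fin n) = ⟨i, h⟩ := by ext; simp; omega
    rw [this] at hadj2
    rw [orient_rev ho hadj2] at hw
    have := tt_eq o (show (i-1)+1 < n by omega) h'
    rw [this] at h3
    rw [show (⟨(i-1)+1, by omega⟩ : Fin n) = ⟨i, h⟩ from by ext; simp; omega] at h3
    rw [h3 h0] at hw
    simp at hw

lemma no_sink {i : ℕ} (h : i < n)
    (h1 : rr o i = true) (h2 : i + 1 < n → tt o i = true)
    (h3 : 0 < i → tt o (i-1) = false) : False := by
  obtain ⟨w, hadj, hw⟩ := exists_in_edge hn hs (⟨i, h⟩, 0)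
  have ho := hs.1
  rcases adj_top hn hs h w hadj with hw' | ⟨h', hw'⟩ | ⟨h', h0, hw'⟩
  · subst hw'
    have := orient_rev ho (adj_rung h)
    rw [this, ← rr_eq o h, h1] at hw
    simp at hw
  · subst hw'
    have := orient_rev ho (adj_rail h' h (0 : Fin 2))
    rw [this, ← tt_eq o h' h, h2 h'] at hw
    simp at hw
  · subst hw'
    have := tt_eq o (show (i-1)+1 < n by omega) h'
    rw [show (⟨(i-1)+1, by omega⟩ : Fin n) = ⟨i, h⟩ from by ext; simp; omega] at this
    rw [← this, h3 h0] at hw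
    exact Bool.false_ne_true hw

/-- the cut argument: if both rails between columns `i` and `i+1` point right,
nothing on the right can reach the left. -/
lemma cut_right {i : ℕ} (hi : i + 1 < n)
    (ht : tt o i = true) (hb : bb o i = true) : False := by
  have ho := hs.1
  have key : ∀ u v : Fin n × Fin 2, Reach o u v → i < u.1.val → i < v.1.val := by
    intro u v huv
    induction huv with
    | refl => exact fun h => h
    | @tail c v huc hcv ih =>
      intro hu
      have hc := ih hu
      by_contra hv
      push_neg at hv
      have hadj : (L n).Adj c v := by
        by_contra hadj
        rw [(ho c v).2 hadj] at hcv
        exact Bool.false_ne_true hcv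
      rw [ladder_adj] at hadj
      rcases hadj with ⟨h1, _⟩ | ⟨h1, h2 | h2⟩
      · rw [h1] at hc; omega
      · omega
      · obtain ⟨⟨ci, hci⟩, cj⟩ := c
        obtain ⟨⟨vi, hvi⟩, vj⟩ := v
        simp only at h1 h2 hc hv hcv
        cases h1
        have e1 : (⟨ci, hci⟩ : Fin n) = ⟨i + 1, hi⟩ := by ext; simp; omega
        have e2 : (⟨vi, hvi⟩ : Fin n) = ⟨i, by omega⟩ := by ext; simp; omega
        rw [e1, e2] at hcv
        have hadjr : (L n).Adj ((⟨i, by omega⟩ : Fin n), cj) (⟨i+1, hi⟩, cj) :=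
          adj_rail hi (by omega) cj
        rw [orient_rev ho hadjr] at hcv
        have hcj : ∀ x : Fin 2, x = 0 ∨ x = 1 := by decide
        rcases hcj cj with h | h <;> subst h
        · rw [← tt_eq o hi (by omega), ht] at hcv; simp at hcv
        · rw [← bb_eq o hi (by omega), hb] at hcv; simp at hcv
  have := key (⟨i+1, hi⟩, 0) (⟨0, by omega⟩, 0) (hs.2 _ _) (by simp)
  simp at this

lemma cut_left {i : ℕ} (hi : i + 1 < n)
    (ht : tt o i = false) (hb : bb o i = false) : False := by
  have ho := hs.1
  have key : ∀ u v : Fin n × Fin 2, Reach o u v → u.1.val ≤ i → v.1.val ≤ i := by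
    intro u v huv
    induction huv with
    | refl => exact fun h => h
    | @tail c v huc hcv ih =>
      intro hu
      have hc := ih hu
      by_contra hv
      push_neg at hv
      have hadj : (L n).Adj c v := by
        by_contra hadj
        rw [(ho c v).2 hadj] at hcv
        exact Bool.false_ne_true hcv
      rw [ladder_adj] at hadj
      rcases hadj with ⟨h1, _⟩ | ⟨h1, h2 | h2⟩
      · rw [h1] at hc; omega
      · obtain ⟨⟨ci, hci⟩, cj⟩ := c
        obtain ⟨⟨vi, hvi⟩, vj⟩ := v
        simp only at h1 h2 hc hv hcv
        cases h1
        have e1 : (⟨ci, hci⟩ : Fin n) = ⟨i, by omega⟩ := by ext; simp; omega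
        have e2 : (⟨vi, hvi⟩ : Fin n) = ⟨i + 1, hi⟩ := by ext; simp; omega
        rw [e1, e2] at hcv
        have hcj : ∀ x : Fin 2, x = 0 ∨ x = 1 := by decide
        rcases hcj cj with h | h <;> subst h
        · rw [← tt_eq o hi (by omega), ht] at hcv; simp at hcv
        · rw [← bb_eq o hi (by omega), hb] at hcv; simp at hcv
      · omega
  have := key (⟨0, by omega⟩, 0) (⟨i+1, hi⟩, 0) (hs.2 _ _) (by simp)
  simp at this

theorem strong_chr : Chr n o := by
  refine ⟨?_, ?_, ?_, ?_⟩
  · intro i hi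
    cases ht : tt o i <;> cases hb : bb o i
    · exact absurd (cut_left hn hs hi ht hb) id
    · rfl
    · rfl
    · exact absurd (cut_right hn hs hi ht hb) id
  · cases hr : rr o 0 <;> cases ht : tt o 0
    · exact absurd (no_source hn hs (show 0 < n by omega) hr
        (fun h => ht) (by omega)) id
    · rfl
    · rfl
    · exact absurd (no_sink hn hs (show 0 < n by omega) hr
        (fun h => ht) (by omega)) id
  · have hlt : n - 1 < n := by omega
    cases hr : rr o (n-1) <;> cases ht : tt o (n-2)
    · rfl
    · exact absurd (no_source hn hs hlt hr (by omega)
        (fun _ => by rw [show n-1-1 = n-2 by omega]; exact ht)) id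
    · exact absurd (no_sink hn hs hlt hr (by omega)
        (fun _ => by rw [show n-1-1 = n-2 by omega]; exact ht)) id
    · rfl
  · intro i h0 hi hrt
    by_contra hne
    cases ht : tt o i
    · rw [ht] at hrt hne
      have ht' : tt o (i-1) = true := by
        cases h : tt o (i-1)
        · rw [h] at hne; exact absurd rfl hne
        · rfl
      exact no_source hn hs (by omega) hrt (fun _ => ht) (fun _ => ht')
    · rw [ht] at hrt hne
      have ht' : tt o (i-1) = false := by
        cases h : tt o (i-1)
        · rfl
        · rw [h] at hne; exact absurd rfl hne
      exact no_sink hn hs (by omega) hrt (fun _ => ht) (fun _ => ht')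

end Backward

theorem strong_iff_chr (hn : 2 ≤ n) :
    IsStrongOrientation (L n) o ↔ IsOrientation (L n) o ∧ Chr n o := by
  constructor
  · intro hs
    exact ⟨hs.1, strong_chr hn hs⟩
  · rintro ⟨ho, hc⟩
    exact chr_strong hn ho hc

end Ladder

namespace Ladder

variable {n : ℕ}

/-- build an orientation from rail directions `t` and rung directions `r` -/
def mkO (n : ℕ) (t r : ℕ → Bool) : Fin n × Fin 2 → Fin n × Fin 2 → Bool :=
  fun u v =>
    if u.1.val = v.1.val then
      (if u.2.val = 0 ∧ v.2.val = 1 then r u.1.val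
       else if u.2.val = 1 ∧ v.2.val = 0 then !r u.1.val else false)
    else if u.1.val + 1 = v.1.val ∧ u.2 = v.2 then
      (if u.2.val = 0 then t u.1.val else !t u.1.val)
    else if v.1.val + 1 = u.1.val ∧ u.2 = v.2 then
      (if u.2.val = 0 then !t v.1.val else t v.1.val)
    else false

lemma fin2_cases : ∀ x : Fin 2, x = 0 ∨ x = 1 := by decide

lemma fin3_cases : ∀ x : Fin 3, x = 0 ∨ x = 1 ∨ x = 2 := by decide

lemma mkO_not_adj (t r : ℕ → Bool) {u v : Fin n × Fin 2}
    (h : ¬ (L n).Adj u v) : mkO n t r u v = false := by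
  rw [ladder_adj] at h
  push_neg at h
  obtain ⟨h1, h2⟩ := h
  unfold mkO
  by_cases a : u.1.val = v.1.val
  · rw [if_pos a]
    have hee : u.1 = v.1 := Fin.ext a
    have h22 := h1 hee
    have hv2 : u.2.val = v.2.val := by rw [h22]
    rw [if_neg (by omega), if_neg (by omega)]
  · rw [if_neg a]
    by_cases d : u.1.val + 1 = v.1.val ∧ u.2 = v.2
    · exact absurd d.1 (h2 d.2).1
    · rw [if_neg d]
      by_cases e : v.1.val + 1 = u.1.val ∧ u.2 = v.2
      · exact absurd e.1 (h2 e.2).2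
      · rw [if_neg e]

lemma mkO_rev (t r : ℕ → Bool) {u v : Fin n × Fin 2}
    (h : (L n).Adj u v) : mkO n t r v u = !mkO n t r u v := by
  rw [ladder_adj] at h
  rcases h with ⟨h1, h2⟩ | ⟨h1, h2⟩
  · have hval : u.1.val = v.1.val := by rw [h1]
    rcases fin2_cases u.2 with hu | hu <;> rcases fin2_cases v.2 with hv | hv
    · exact absurd (hu.trans hv.symm) h2
    · simp [mkO, hu, hv, hval, h1]
    · simp [mkO, hu, hv, hval, h1]
    · exact absurd (hu.trans hv.symm) h2
  · rcases h2 with h2 | h2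
    · have hA : ¬ u.1.val = v.1.val := by omega
      have hA' : ¬ v.1.val = u.1.val := by omega
      have hC : ¬ (v.1.val + 1 = u.1.val) := by omega
      rcases fin2_cases u.2 with hu | hu
      · have hv : v.2 = 0 := by rw [← h1, hu]
        simp [mkO, hu, hv, hA, hA', hC, h2]
      · have hv : v.2 = 1 := by rw [← h1, hu]
        simp [mkO, hu, hv, hA, hA', hC, h2]
    · have hA : ¬ u.1.val = v.1.val := by omega
      have hA' : ¬ v.1.val = u.1.val := by omega
      have hB : ¬ (u.1.val + 1 = v.1.val) := by omega
      rcases fin2_cases u.2 with hu | hu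
      · have hv : v.2 = 0 := by rw [← h1, hu]
        simp [mkO, hu, hv, hA, hA', hB, h2]
      · have hv : v.2 = 1 := by rw [← h1, hu]
        simp [mkO, hu, hv, hA, hA', hB, h2]

lemma mkO_orientation (t r : ℕ → Bool) : IsOrientation (L n) (mkO n t r) := by
  intro u v
  constructor
  · intro h
    rw [mkO_rev t r h]
    cases hx : mkO n t r u v <;> simp
  · exact mkO_not_adj t r

lemma mkO_tt (t r : ℕ → Bool) {i : ℕ} (h : i + 1 < n) :
    tt (mkO n t r) i = t i := by
  rw [tt_eq _ h (by omega)]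
  unfold mkO
  norm_num

lemma mkO_bb (t r : ℕ → Bool) {i : ℕ} (h : i + 1 < n) :
    bb (mkO n t r) i = !t i := by
  rw [bb_eq _ h (by omega)]
  unfold mkO
  norm_num

lemma mkO_rr (t r : ℕ → Bool) {i : ℕ} (h : i < n) :
    rr (mkO n t r) i = r i := by
  rw [rr_eq _ h]
  unfold mkO
  norm_num

lemma mkO_chr (hn : 2 ≤ n) (t r : ℕ → Bool)
    (h0 : r 0 = !t 0) (hN : r (n - 1) = t (n - 2))
    (hf : ∀ i, 0 < i → i + 1 < n → r i = t i → t (i - 1) = t i) :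
    Chr n (mkO n t r) := by
  refine ⟨?_, ?_, ?_, ?_⟩
  · intro i hi
    rw [mkO_bb t r hi, mkO_tt t r hi]
  · rw [mkO_rr t r (by omega), mkO_tt t r (by omega), h0]
  · rw [mkO_rr t r (by omega), mkO_tt t r (by omega), hN]
  · intro i hi1 hi2 hr
    rw [mkO_rr t r (by omega), mkO_tt t r (by omega)] at hr
    rw [mkO_tt t r (by omega), mkO_tt t r (by omega)]
    exact hf i hi1 hi2 hr

lemma orient_ext {o o' : Fin n × Fin 2 → Fin n × Fin 2 → Bool}
    (ho : IsOrientation (L n) o) (ho' : IsOrientation (L n) o')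
    (htt : ∀ i, i + 1 < n → tt o i = tt o' i)
    (hbb : ∀ i, i + 1 < n → bb o i = bb o' i)
    (hrr : ∀ i, i < n → rr o i = rr o' i) : o = o' := by
  have rev : ∀ (w : Fin n × Fin 2 → Fin n × Fin 2 → Bool),
      IsOrientation (L n) w → ∀ u v, (L n).Adj u v → w u v = !w v u := by
    intro w hw u v hadj
    have := orient_rev hw hadj
    rw [this]
    cases w u v <;> rfl
  funext u v
  by_cases hadj : (L n).Adj u v
  · obtain ⟨⟨ui, hui⟩, uj⟩ := u
    obtain ⟨⟨vi, hvi⟩, vj⟩ := v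
    have hadj2 := hadj
    rw [ladder_adj] at hadj2
    rcases hadj2 with ⟨h1, h2⟩ | ⟨h1, h2⟩
    · simp only [Fin.mk.injEq] at h1
      simp only at h2
      subst h1
      rcases fin2_cases uj with hu | hu <;> rcases fin2_cases vj with hv | hv
      · exact absurd (hu.trans hv.symm) h2
      · subst hu; subst hv
        rw [← rr_eq o hui, ← rr_eq o' hui, hrr ui hui]
      · subst hu; subst hv
        rw [rev o ho _ _ hadj, rev o' ho' _ _ hadj]
        rw [← rr_eq o hui, ← rr_eq o' hui, hrr ui hui]
      · exact absurd (hu.trans hv.symm) h2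
    · simp only at h1 h2
      subst h1
      rcases h2 with h2 | h2
      · subst h2
        rcases fin2_cases uj with hu | hu <;> subst hu
        · rw [← tt_eq o hvi hui, ← tt_eq o' hvi hui, htt ui hvi]
        · rw [← bb_eq o hvi hui, ← bb_eq o' hvi hui, hbb ui hvi]
      · have : ui = vi + 1 := by omega
        subst this
        rw [rev o ho _ _ hadj, rev o' ho' _ _ hadj]
        rcases fin2_cases uj with hu | hu <;> subst hu
        · rw [← tt_eq o hui hvi, ← tt_eq o' hui hvi, htt vi hui]
        · rw [← bb_eq o hui hvi, ← bb_eq o' hui hvi, hbb vi hui]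
  · rw [(ho u v).2 hadj, (ho' u v).2 hadj]

end Ladder

namespace Ladder

variable {n : ℕ}

/-- decode the rail directions from the choice data -/
def dec (n : ℕ) (t0 : Bool) (c : Fin (n - 2) → Fin 3) : ℕ → Bool
  | 0 => t0
  | (i + 1) =>
    if h : i < n - 2 then
      (if c ⟨i, h⟩ = 2 then !(dec n t0 c i) else dec n t0 c i)
    else dec n t0 c i

/-- decode the rung directions from the choice data -/
def rdec (n : ℕ) (t0 : Bool) (c : Fin (n - 2) → Fin 3) : ℕ → Bool := fun i =>
  if i = 0 then !t0
  else if h : i - 1 < n - 2 then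
    (if c ⟨i - 1, h⟩ = 1 then !(dec n t0 c (i - 1)) else dec n t0 c (i - 1))
  else dec n t0 c (n - 2)

/-- encode an orientation as choice data -/
def enc (o : Fin n × Fin 2 → Fin n × Fin 2 → Bool) : Fin (n - 2) → Fin 3 :=
  fun j =>
    if tt o (j.val + 1) = tt o j.val then
      (if rr o (j.val + 1) = tt o j.val then 0 else 1)
    else 2

section Count

variable (hn : 2 ≤ n)

include hn

lemma dec_rdec_chr (t0 : Bool) (c : Fin (n - 2) → Fin 3) :
    Chr n (mkO n (dec n t0 c) (rdec n t0 c)) := by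
  apply mkO_chr hn
  · simp [rdec, dec]
  · have h1 : ¬ (n - 1 = 0) := by omega
    have h2 : ¬ (n - 1 - 1 < n - 2) := by omega
    simp [rdec, h1, h2]
  · intro i hi1 hi2 hri
    have hlt : i - 1 < n - 2 := by omega
    obtain ⟨i', rfl⟩ : ∃ i', i = i' + 1 := ⟨i - 1, by omega⟩
    have hi' : i' < n - 2 := by omega
    simp only [rdec, dec, Nat.add_sub_cancel, dif_pos hi',
      if_neg (by omega : ¬ i' + 1 = 0)] at hri ⊢
    rcases fin3_cases (c ⟨i', hi'⟩) with h | h | h <;> rw [h] at hri ⊢ <;>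
      simp_all

lemma dec_eq_tt {o : Fin n × Fin 2 → Fin n × Fin 2 → Bool}
    (hc : Chr n o) : ∀ i, i ≤ n - 2 → dec n (tt o 0) (enc o) i = tt o i := by
  intro i
  induction i with
  | zero => intro _; rfl
  | succ i ih =>
    intro hi
    have hlt : i < n - 2 := by omega
    have hdec := ih (by omega)
    simp only [dec, dif_pos hlt]
    by_cases he : tt o (i + 1) = tt o i
    · have : enc o ⟨i, hlt⟩ ≠ 2 := by
        simp only [enc, if_pos he]
        by_cases hr : rr o (i + 1) = tt o i <;> simp [hr]
      rw [if_neg (by simpa using this), hdec, he]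
    · have : enc o ⟨i, hlt⟩ = 2 := by simp only [enc, if_neg he]
      rw [if_pos this, hdec]
      cases h1 : tt o (i + 1) <;> cases h2 : tt o i <;> simp_all
lemma rdec_eq_rr {o : Fin n × Fin 2 → Fin n × Fin 2 → Bool}
    (hc : Chr n o) : ∀ i, i < n → rdec n (tt o 0) (enc o) i = rr o i := by
  intro i hi
  by_cases h0 : i = 0
  · subst h0
    simp only [rdec, if_pos rfl]
    exact hc.2.1.symm
  · by_cases hlast : i = n - 1
    · subst hlast
      have h2 : ¬ (n - 1 - 1 < n - 2) := by omega
      simp only [rdec, if_neg h0, dif_neg h2]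
      rw [dec_eq_tt hn hc (n - 2) (le_refl _)]
      exact hc.2.2.1.symm
    · have hlt : i - 1 < n - 2 := by omega
      obtain ⟨i', rfl⟩ : ∃ i', i = i' + 1 := ⟨i - 1, by omega⟩
      have hi' : i' < n - 2 := by omega
      simp only [rdec, if_neg h0, Nat.add_sub_cancel, dif_pos hi']
      rw [dec_eq_tt hn hc i' (by omega)]
      have henc : enc o ⟨i', hi'⟩ =
          if tt o (i' + 1) = tt o i' then
            (if rr o (i' + 1) = tt o i' then 0 else 1) else 2 := rfl
      by_cases he : tt o (i' + 1) = tt o i'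
      · rw [if_pos he] at henc
        by_cases hr : rr o (i' + 1) = tt o i'
        · rw [if_pos hr] at henc
          rw [henc]
          simp [hr]
        · rw [if_neg hr] at henc
          rw [henc]
          simp only [if_pos rfl]
          cases h1 : rr o (i' + 1) <;> cases h2 : tt o i' <;> simp_all
      · rw [if_neg he] at henc
        rw [henc, if_neg (by decide)]
        -- rr o (i'+1) ≠ tt o (i'+1), else Chr forces tt o i' = tt o (i'+1)
        have hne : rr o (i' + 1) ≠ tt o (i' + 1) := by
          intro hx
          have := hc.2.2.2 (i' + 1) (by omega) (by omega) hx
          rw [Nat.add_sub_cancel] at this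
          exact he this.symm
        cases h1 : rr o (i' + 1) <;> cases h2 : tt o i' <;>
          cases h3 : tt o (i' + 1) <;> simp_all

lemma roundtrip_A {o : Fin n × Fin 2 → Fin n × Fin 2 → Bool}
    (ho : IsOrientation (L n) o) (hc : Chr n o) :
    mkO n (dec n (tt o 0) (enc o)) (rdec n (tt o 0) (enc o)) = o := by
  apply orient_ext (mkO_orientation _ _) ho
  · intro i hi
    rw [mkO_tt _ _ hi, dec_eq_tt hn hc i (by omega)]
  · intro i hi
    rw [mkO_bb _ _ hi, dec_eq_tt hn hc i (by omega), hc.1 i hi]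
  · intro i hi
    rw [mkO_rr _ _ hi, rdec_eq_rr hn hc i hi]

lemma roundtrip_B (t0 : Bool) (c : Fin (n - 2) → Fin 3) :
    (tt (mkO n (dec n t0 c) (rdec n t0 c)) 0,
      enc (mkO n (dec n t0 c) (rdec n t0 c))) = (t0, c) := by
  set t := dec n t0 c with hdt
  set r := rdec n t0 c with hdr
  have h1 : tt (mkO n t r) 0 = t0 := by
    rw [mkO_tt t r (by omega)]
    rfl
  refine Prod.ext h1 ?_
  funext j
  obtain ⟨jv, hjv⟩ := j
  have hj1 : jv + 1 + 1 < n := by omega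
  have hj2 : jv + 1 < n := by omega
  show (if tt (mkO n t r) (jv + 1) = tt (mkO n t r) jv then
      (if rr (mkO n t r) (jv + 1) = tt (mkO n t r) jv then 0 else 1)
    else 2) = c ⟨jv, hjv⟩
  rw [mkO_tt t r hj1, mkO_tt t r (by omega), mkO_rr t r hj2]
  have hdec : t (jv + 1) = if c ⟨jv, hjv⟩ = 2 then !(t jv) else t jv := by
    rw [hdt]
    show dec n t0 c (jv + 1) = _
    simp only [dec, dif_pos hjv]
  have hrdec : r (jv + 1) = if c ⟨jv, hjv⟩ = 1 then !(t jv) else t jv := by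
    rw [hdr, hdt]
    show rdec n t0 c (jv + 1) = _
    simp only [rdec, if_neg (by omega : ¬ jv + 1 = 0), Nat.add_sub_cancel,
      dif_pos hjv]
  rcases fin3_cases (c ⟨jv, hjv⟩) with h | h | h <;>
    rw [h] at hdec hrdec ⊢ <;>
    simp only [show (0 : Fin 3) ≠ 2 by decide, show (1 : Fin 3) ≠ 2 by decide,
      if_neg, if_pos, reduceIte] at hdec hrdec <;>
    rw [hdec, hrdec] <;>
    cases htj : t jv <;> simp

open Classical in
theorem count_chr :
    (Finset.univ.filter (fun o : Fin n × Fin 2 → Fin n × Fin 2 → Bool =>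
        IsOrientation (L n) o ∧ Chr n o)).card = 2 * 3 ^ (n - 2) := by
  classical
  rw [show (2 * 3 ^ (n - 2)) =
    Fintype.card (Bool × (Fin (n - 2) → Fin 3)) by simp, ← Finset.card_univ]
  apply Finset.card_bij'
    (i := fun o _ => (tt o 0, enc o))
    (j := fun p _ => mkO n (dec n p.1 p.2) (rdec n p.1 p.2))
  · intro a ha
    exact Finset.mem_univ _
  · intro p _
    simp only [Finset.mem_filter, Finset.mem_univ, true_and]
    exact ⟨mkO_orientation _ _, dec_rdec_chr hn p.1 p.2⟩
  · intro a ha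
    simp only [Finset.mem_filter, Finset.mem_univ, true_and] at ha
    exact roundtrip_A hn ha.1 ha.2
  · intro p _
    exact roundtrip_B hn p.1 p.2

end Count

end Ladder

open Finset Classical in
/-- For `n ≥ 2`, the ladder graph `L_n = P_n □ P_2` has exactly `2 · 3^(n−2)`
strong orientations. -/
theorem stmt_13 (n : ℕ) (hn : 2 ≤ n) :
    (univ.filter (fun o : Fin n × Fin 2 → Fin n × Fin 2 → Bool =>
        IsStrongOrientation (SimpleGraph.pathGraph n □ SimpleGraph.pathGraph 2) o)).card
      = 2 * 3 ^ (n - 2) := by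
  have heq : (univ.filter (fun o : Fin n × Fin 2 → Fin n × Fin 2 → Bool =>
      IsStrongOrientation (SimpleGraph.pathGraph n □ SimpleGraph.pathGraph 2) o)) =
      (univ.filter (fun o : Fin n × Fin 2 → Fin n × Fin 2 → Bool =>
        IsOrientation (Ladder.L n) o ∧ Ladder.Chr n o)) :=
    Finset.filter_congr (fun o _ => Ladder.strong_iff_chr hn)
  rw [heq]
  exact Ladder.count_chr hn
end

section
/- Let G be a graph with vertex set {v_0, v_1, …, v_n}. For each i ∈ [n], let X_i range over the neighbours of v_i. For each simple oriented cycle C = (v_{i_0}, v_{i_1}, …, v_{i_ℓ} = v_{i_0}) define φ_C = ¬(X_{i_0} = i_1 ∧ ⋯ ∧ X_{i_{ℓ−1}} = i_ℓ). Then for any two distinct simple oriented cycles C, C' whose clause scopes intersect, φ_C ∨ φ_{C'} is a tautology; i.e., the spanning-arborescence instance Φ = ∧_C φ_C is extremal. -/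
lemma zmod_reach {m : ℕ} (hm : 2 ≤ m) (i₀ i : ZMod m) : ∃ k : ℕ, i = i₀ + k := by
  haveI : NeZero m := ⟨by omega⟩
  exact ⟨(i - i₀).val, by rw [ZMod.natCast_val, ZMod.cast_id]; ring⟩

/-- Extremality of the spanning-arborescence (cycle-popping) instance: for two
distinct simple oriented cycles `c` (of length `ℓ`) and `c'` (of length `ℓ'`)
avoiding the root `0` whose vertex sets (clause scopes) intersect, the clauses
`φ_C` and `φ_{C'}` cannot both be false, i.e. `φ_C ∨ φ_{C'}` is a tautology.
Two parameterised cycles represent the same oriented cycle iff they have the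
same vertex set and agree on successors. -/
theorem stmt_15 {n : ℕ} (G : SimpleGraph (Fin (n + 1)))
    (ℓ ℓ' : ℕ) (hℓ : 2 ≤ ℓ) (hℓ' : 2 ≤ ℓ')
    (c : ZMod ℓ → Fin (n + 1)) (c' : ZMod ℓ' → Fin (n + 1))
    (hcinj : Function.Injective c) (hc'inj : Function.Injective c')
    (hc0 : ∀ i, c i ≠ 0) (hc'0 : ∀ j, c' j ≠ 0)
    (hcadj : ∀ i, G.Adj (c i) (c (i + 1)))
    (hc'adj : ∀ j, G.Adj (c' j) (c' (j + 1)))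
    (hdist : ¬ (Set.range c = Set.range c' ∧
      ∀ i j, c i = c' j → c (i + 1) = c' (j + 1)))
    (hmeet : (Set.range c ∩ Set.range c').Nonempty)
    (X : Fin (n + 1) → Fin (n + 1)) :
    (∃ i, X (c i) ≠ c (i + 1)) ∨ (∃ j, X (c' j) ≠ c' (j + 1)) := by
  by_contra h
  push_neg at h
  obtain ⟨h1, h2⟩ := h
  -- successor agreement
  have hsucc : ∀ i j, c i = c' j → c (i + 1) = c' (j + 1) := by
    intro i j hij
    rw [← h1 i, ← h2 j, hij]
  have hsucc' : ∀ j i, c' j = c i → c' (j + 1) = c (i + 1) := by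
    intro j i hij; exact (hsucc i j hij.symm).symm
  obtain ⟨v, ⟨i₀, hi₀⟩, ⟨j₀, hj₀⟩⟩ := hmeet
  have hstep : ∀ k : ℕ, ∃ j, c (i₀ + k) = c' j ∧ c (i₀ + k + 1) = c' (j + 1) := by
    intro k
    induction k with
    | zero =>
      refine ⟨j₀, by simpa using hi₀.trans hj₀.symm, ?_⟩
      simpa using hsucc i₀ j₀ (hi₀.trans hj₀.symm)
    | succ k ih =>
      obtain ⟨j, hj, hj'⟩ := ih
      refine ⟨j + 1, by push_cast; simpa [add_assoc] using hj', ?_⟩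
      have := hsucc (i₀ + k + 1) (j + 1) hj'
      push_cast
      simpa [add_assoc] using this
  have hstep' : ∀ k : ℕ, ∃ i, c' (j₀ + k) = c i ∧ c' (j₀ + k + 1) = c (i + 1) := by
    intro k
    induction k with
    | zero =>
      refine ⟨i₀, by simpa using hj₀.trans hi₀.symm, ?_⟩
      simpa using hsucc' j₀ i₀ (hj₀.trans hi₀.symm)
    | succ k ih =>
      obtain ⟨i, hi, hi'⟩ := ih
      refine ⟨i + 1, by push_cast; simpa [add_assoc] using hi', ?_⟩
      have := hsucc' (j₀ + k + 1) (i + 1) hi'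
      push_cast
      simpa [add_assoc] using this
  apply hdist
  refine ⟨?_, hsucc⟩
  apply Set.eq_of_subset_of_subset
  · rintro x ⟨i, rfl⟩
    obtain ⟨k, rfl⟩ := zmod_reach hℓ i₀ i
    obtain ⟨j, hj, -⟩ := hstep k
    exact ⟨j, hj.symm⟩
  · rintro x ⟨j, rfl⟩
    obtain ⟨k, rfl⟩ := zmod_reach hℓ' j₀ j
    obtain ⟨i, hi, -⟩ := hstep' k
    exact ⟨i, hi.symm⟩
end
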